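/- arXiv:2004.03825 — 8 statements merged into one kernel-verified Lean document; each statement's English description precedes it below -/
import Mathlib

section
/- Suppose g(ζ,ζ̄) = (ζ - ζ̄)h(ζ,ζ̄) can be written as g(ζ,ζ̄) = p(ζ)q(ζ̄) + p(ζ̄)r(ζ) with p, q, r real polynomials and p not identically zero. Then r = -q, and consequently h(ζ,ζ̄) = (p(ζ)q(ζ̄) - p(ζ̄)q(ζ))/(ζ - ζ̄), i.e. h is the Bézoutian of p and q. -/
open Polynomial BigOperators

theorem Polynomial.eq_neg_of_eval_mul_add_eq_zero {R : Type*} [CommRing R] [IsDomain R]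
    [Infinite R] {p q r : R[X]} (hp : p ≠ 0)
    (h : ∀ x, p.eval x * (q.eval x + r.eval x) = 0) : r = -q := by
  have hprod : p * (q + r) = 0 := Polynomial.funext fun x => by simpa using h x
  exact eq_neg_of_add_eq_zero_right ((mul_eq_zero.mp hprod).resolve_left hp)

/-- If `(ζ-ζ̄)h(ζ,ζ̄) = p(ζ)q(ζ̄) + p(ζ̄)r(ζ)` with `p, q, r` real polynomials and
`p ≠ 0`, then `r = -q` and `h` is the Bézoutian of `p` and `q`:
`(ζ-ζ̄)h(ζ,ζ̄) = p(ζ)q(ζ̄) - p(ζ̄)q(ζ)`. -/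
theorem bezoutian_from_decomposition (p q r : Polynomial ℝ) (hp : p ≠ 0)
    (h : ℝ → ℝ → ℝ)
    (hg : ∀ x y : ℝ, (x - y) * h x y = p.eval x * q.eval y + p.eval y * r.eval x) :
    r = -q ∧
      ∀ x y : ℝ, (x - y) * h x y = p.eval x * q.eval y - p.eval y * q.eval x := by
  have hr : r = -q := eq_neg_of_eval_mul_add_eq_zero hp fun x => by
    have hdiag := hg x x
    rw [sub_self, zero_mul] at hdiag
    linear_combination -hdiag
  refine ⟨hr, fun x y => ?_⟩
  rw [hg, hr, eval_neg]
  ring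
end

section
/- Let p(ζ) = ∏_{j=1}^m (ζ - λⱼ) be a monic strictly hyperbolic polynomial (all λⱼ real and distinct) and let q be a real polynomial of degree m-1 with positive leading coefficient whose roots μ₁,...,μ_{m-1} strictly interlace the roots of p: λ₁ < μ₁ < λ₂ < ⋯ < μ_{m-1} < λ_m. Then there exists c > 0 such that the Bézoutian form satisfies ĥ_{p,q}(z,z̄) ≥ c Σ_{k=1}^m |p̂ₖ(z)|² for all z ∈ ℂ^m, where pₖ(ζ) = ∏_{j≠k}(ζ - λⱼ). -/
/-!
Since `deg q < deg p`, Lagrange interpolation at the roots of `p` writes `q = Σ aₖ pₖ` with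
`aₖ = q(λₖ) / pₖ(λₖ)`. As `p = (ζ - λₖ) pₖ` for every `k`, this turns the Bézoutian into
`h_{p,q}(ζ, η) = Σ aₖ pₖ(ζ) pₖ(η)`, hence `ĥ_{p,q}(z, z̄) = Σ aₖ |p̂ₖ(z)|²`. Interlacing gives
`q(λₖ)` and `pₖ(λₖ) = ∏_{j ≠ k} (λₖ - λⱼ)` the same sign, so every `aₖ > 0` and `c = min aₖ`.
-/

open Polynomial Finset Lagrange

section Lagrange

variable {F ι : Type*} [Field F] [DecidableEq ι] {s : Finset ι} {v : ι → F}

theorem Lagrange.eq_sum_C_mul_nodal_erase (hvs : Set.InjOn v s) {f : F[X]} (hf : f.degree < #s) :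
    f = ∑ i ∈ s, C (f.eval (v i) * nodalWeight s v i) * nodal (s.erase i) v := by
  conv_lhs => rw [eq_interpolate hvs hf, interpolate_apply]
  refine sum_congr rfl fun i hi => ?_
  rw [basis_eq_prod_sub_inv_mul_nodal_div hi, ← nodal_erase_eq_nodal_div hi, C_mul, mul_assoc]

end Lagrange

theorem Lagrange.eval_nodal_mul_eval_sub_eval_nodal_mul_eval {R ι : Type*} [CommRing R]
    [DecidableEq ι] {s : Finset ι} (v a : ι → R) (x y : R) {q : R[X]}
    (hq : q = ∑ i ∈ s, C (a i) * nodal (s.erase i) v) :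
    (nodal s v).eval x * q.eval y - (nodal s v).eval y * q.eval x
      = (x - y) * ∑ i ∈ s, a i * (nodal (s.erase i) v).eval x * (nodal (s.erase i) v).eval y := by
  simp only [hq, eval_finsetSum, eval_mul, eval_C, mul_sum, ← sum_sub_distrib]
  refine sum_congr rfl fun i hi => ?_
  rw [nodal_eq_mul_nodal_erase hi, eval_mul, eval_mul]
  simp only [eval_sub, eval_X, eval_C]
  ring

section Coeff

variable {R : Type*} [CommRing R] [IsDomain R]

theorem Polynomial.eq_coeff_of_sum_mul_pow_eq_eval_on_infinite {n : ℕ} (c : Fin n → R)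
    (P : R[X]) {S : Set R} (hS : S.Infinite)
    (h : ∀ x ∈ S, ∑ i, c i * x ^ (i : ℕ) = P.eval x) (i : Fin n) :
    c i = P.coeff i := by
  have hP : ∑ i, C (c i) * X ^ (i : ℕ) = P :=
    eq_of_infinite_eval_eq _ _ (hS.mono fun x hx => by simpa [eval_finsetSum] using h x hx)
  simp [← hP, Fin.val_inj]

theorem Polynomial.eq_sum_mul_coeff_mul_coeff_of_sum_sum_eq [Infinite R] {n : ℕ} {ι : Type*}
    [Fintype ι] (h : Fin n → Fin n → R) (a : ι → R) (P : ι → R[X])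
    (hP : ∀ x y : R, x ≠ y →
      ∑ i, ∑ j, h i j * x ^ (i : ℕ) * y ^ (j : ℕ) = ∑ k, a k * (P k).eval x * (P k).eval y)
    (i j : Fin n) :
    h i j = ∑ k, a k * (P k).coeff i * (P k).coeff j := by
  have hrow : ∀ x, ∑ i, h i j * x ^ (i : ℕ) = ∑ k, a k * (P k).eval x * (P k).coeff j := by
    intro x
    have := eq_coeff_of_sum_mul_pow_eq_eval_on_infinite (fun j => ∑ i, h i j * x ^ (i : ℕ))
      (∑ k, C (a k * (P k).eval x) * P k) (Set.finite_singleton x).infinite_compl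
      (fun y hy => by
        simp only [eval_finsetSum, eval_mul, eval_C, sum_mul, ← hP x y (Ne.symm hy)]
        exact sum_comm) j
    simpa only [finsetSum_coeff, coeff_C_mul] using this
  have := eq_coeff_of_sum_mul_pow_eq_eval_on_infinite (fun i => h i j)
    (∑ k, C (a k * (P k).coeff j) * P k) Set.infinite_univ
    (fun x _ => by
      simp only [hrow, eval_finsetSum, eval_mul, eval_C]
      exact sum_congr rfl fun k _ => by ring) i
  simpa only [finsetSum_coeff, coeff_C_mul, mul_right_comm] using this

end Coeff

theorem re_sum_sum_sum_mul_mul_conj {ι κ : Type*} [Fintype ι] [Fintype κ]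
    (a : ι → ℝ) (c : ι → κ → ℝ) (z : κ → ℂ) :
    (∑ i, ∑ j, ((∑ k, a k * c k i * c k j : ℝ) : ℂ) * z i * starRingEnd ℂ (z j)).re
      = ∑ k, a k * ‖∑ i, (c k i : ℂ) * z i‖ ^ 2 := by
  have hform : ∑ i, ∑ j, ((∑ k, a k * c k i * c k j : ℝ) : ℂ) * z i * starRingEnd ℂ (z j)
      = ∑ k, (a k : ℂ) * ((∑ i, (c k i : ℂ) * z i) * starRingEnd ℂ (∑ j, (c k j : ℂ) * z j)) := by
    push_cast
    simp only [map_sum, map_mul, Complex.conj_ofReal, sum_mul, mul_sum]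
    rw [sum_comm_cycle]
    refine sum_congr rfl fun k _ => ?_
    rw [sum_comm]
    exact sum_congr rfl fun j _ => sum_congr rfl fun i _ => by ring
  rw [hform, Complex.re_sum]
  refine sum_congr rfl fun k _ => ?_
  rw [Complex.mul_conj, ← Complex.ofReal_mul, Complex.ofReal_re, Complex.normSq_eq_norm_sq]

theorem exists_pos_mul_sum_le_sum_mul {ι : Type*} [Fintype ι] [Nonempty ι] {a : ι → ℝ}
    (ha : ∀ k, 0 < a k) :
    ∃ c > 0, ∀ b : ι → ℝ, (∀ k, 0 ≤ b k) → c * ∑ k, b k ≤ ∑ k, a k * b k := by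
  refine ⟨univ.inf' univ_nonempty a, (lt_inf'_iff _).2 fun k _ => ha k, fun b hb => ?_⟩
  rw [mul_sum]
  exact sum_le_sum fun k _ => mul_le_mul_of_nonneg_right (inf'_le _ (mem_univ k)) (hb k)

theorem Fin.prod_erase_univ_eq_prod_succAbove {M : Type*} [CommMonoid M] {n : ℕ}
    (f : Fin (n + 1) → M) (k : Fin (n + 1)) :
    ∏ j ∈ univ.erase k, f j = ∏ j, f (k.succAbove j) := by
  rw [Fin.univ_succAbove n k, erase_cons, prod_map, Fin.coe_succAboveEmb]

/-- Pairing `λₖ - μⱼ` with `λₖ - λ_{k.succAbove j}`: by interlacing, `μⱼ` and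
`λ_{k.succAbove j}` lie on the same side of `λₖ`. -/
theorem interlacing_prod_div_prod_erase_pos {m : ℕ} {lam : Fin (m + 1) → ℝ}
    (hlam : StrictMono lam) {mu : Fin m → ℝ}
    (hint : ∀ k : Fin m, lam k.castSucc < mu k ∧ mu k < lam k.succ) (k : Fin (m + 1)) :
    0 < (∏ j, (lam k - mu j)) / ∏ j ∈ univ.erase k, (lam k - lam j) := by
  rw [Fin.prod_erase_univ_eq_prod_succAbove, ← prod_div_distrib]
  refine prod_pos fun j _ => ?_
  obtain ⟨hlo, hhi⟩ := hint j
  rcases lt_or_ge j.castSucc k with hjk | hkj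
  · rw [Fin.succAbove_of_castSucc_lt _ _ hjk]
    have : lam j.succ ≤ lam k := hlam.monotone (Fin.castSucc_lt_iff_succ_le.1 hjk)
    exact div_pos (by linarith) (by linarith)
  · rw [Fin.succAbove_of_le_castSucc _ _ hkj]
    have : lam k ≤ lam j.castSucc := hlam.monotone hkj
    exact div_pos_of_neg_of_neg (by linarith) (by linarith)

/-- Bézoutian of a strictly hyperbolic `p` (degree `m+1`) and a separating `q`
dominates the sum `Σ |p̂ₖ(z)|²`. -/
theorem bezout_form_lower_bound_strict (m : ℕ) (lam : Fin (m + 1) → ℝ)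
    (hlam : StrictMono lam) (mu : Fin m → ℝ) (c : ℝ) (hc : 0 < c)
    (hint : ∀ k : Fin m, lam k.castSucc < mu k ∧ mu k < lam k.succ)
    (p q : Polynomial ℝ)
    (hp : p = ∏ j, (X - C (lam j)))
    (hq : q = C c * ∏ j, (X - C (mu j)))
    (h : Fin (m + 1) → Fin (m + 1) → ℝ)
    (hh : ∀ x y : ℝ,
      (x - y) * ∑ i : Fin (m + 1), ∑ j : Fin (m + 1), h i j * x ^ (i : ℕ) * y ^ (j : ℕ)
        = p.eval x * q.eval y - p.eval y * q.eval x) :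
    ∃ c' > 0, ∀ z : Fin (m + 1) → ℂ,
      c' * ∑ k : Fin (m + 1),
          ‖∑ i : Fin (m + 1),
              (((∏ j ∈ Finset.univ.erase k, (X - C (lam j))).coeff i : ℝ) : ℂ) * z i‖ ^ 2
        ≤ (∑ i : Fin (m + 1), ∑ j : Fin (m + 1),
            (h i j : ℂ) * z i * (starRingEnd ℂ) (z j)).re := by
  set a : Fin (m + 1) → ℝ := fun k => q.eval (lam k) * nodalWeight univ lam k
  have ha : ∀ k, 0 < a k := fun k => by
    simp only [a, hq, nodalWeight, prod_inv_distrib, eval_mul, eval_C, eval_prod, eval_sub,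
      eval_X, ← div_eq_mul_inv, mul_div_assoc]
    exact mul_pos hc (interlacing_prod_div_prod_erase_pos hlam hint k)
  have hq_deg : q.degree < #(univ : Finset (Fin (m + 1))) := by
    rw [hq, ← nodal_eq, degree_C_mul hc.ne', degree_nodal, card_univ, card_univ,
      Fintype.card_fin, Fintype.card_fin]
    exact_mod_cast m.lt_succ_self
  have hq_lagrange : q = ∑ k, C (a k) * nodal (univ.erase k) lam :=
    eq_sum_C_mul_nodal_erase hlam.injective.injOn hq_deg
  have hbezout : ∀ x y, p.eval x * q.eval y - p.eval y * q.eval x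
      = (x - y) *
        ∑ k, a k * (nodal (univ.erase k) lam).eval x * (nodal (univ.erase k) lam).eval y :=
    fun x y => hp ▸ eval_nodal_mul_eval_sub_eval_nodal_mul_eval lam a x y hq_lagrange
  have hcoeff := eq_sum_mul_coeff_mul_coeff_of_sum_sum_eq h a (fun k => nodal (univ.erase k) lam)
    fun x y hxy => mul_left_cancel₀ (sub_ne_zero.2 hxy) ((hh x y).trans (hbezout x y))
  obtain ⟨c', hc', hle⟩ := exists_pos_mul_sum_le_sum_mul ha
  refine ⟨c', hc', fun z => ?_⟩
  simp only [hcoeff, re_sum_sum_sum_mul_mul_conj]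
  exact hle _ fun k => sq_nonneg _
end

section
/- Let p be a monic strictly hyperbolic polynomial of degree m and let q be a real polynomial of degree at most m-1. If there exists c > 0 with ĥ_{p,q}(z,z̄) ≥ c Σ_{k=1}^m |p̂ₖ(z)|² for all z ∈ ℂ^m, then q is hyperbolic of degree m-1 with positive leading coefficient, and its roots strictly interlace those of p. -/
/-!
Write `B(x, y) = ∑ hᵢⱼ xⁱ yʲ = (p(x)q(y) - p(y)q(x)) / (x - y)`. Evaluating the form on the
real moment vector `z = (xⁱ)ᵢ` turns the hypothesis into `c ∑ₖ pₖ(x)² ≤ B(x, x)`. At a root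
`λₖ` of `p` one has `B(λₖ, λₖ) = pₖ(λₖ) q(λₖ)`, so `pₖ(λₖ) q(λₖ) ≥ c pₖ(λₖ)² > 0` and `q(λₖ)`
carries the sign `(-1)^(m-k)` of `pₖ(λₖ)` (indices `0, …, m`). Hence `q` changes sign between
consecutive roots of `p`, which gives `m` roots `μₖ` strictly interlacing the `λₖ`; since
`deg q ≤ m` they are all the roots of `q`, and `q(λₘ) > 0` makes its leading coefficient
positive.
-/

open Polynomial Finset

theorem bezout_sum_self_eq_of_eq_X_sub_C_mul {K : Type*} [Field K] [Infinite K] {n : ℕ}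
    (h : Fin n → Fin n → K) {p q g : K[X]} {a : K}
    (hp : p = (X - C a) * g)
    (hh : ∀ x y : K, (x - y) * ∑ i : Fin n, ∑ j : Fin n, h i j * x ^ (i : ℕ) * y ^ (j : ℕ)
        = p.eval x * q.eval y - p.eval y * q.eval x) :
    ∑ i : Fin n, ∑ j : Fin n, h i j * a ^ (i : ℕ) * a ^ (j : ℕ) = g.eval a * q.eval a := by
  set S : K[X] := ∑ i : Fin n, ∑ j : Fin n, C (h i j * a ^ (j : ℕ)) * X ^ (i : ℕ)
  have hS : ∀ x, S.eval x = ∑ i : Fin n, ∑ j : Fin n, h i j * x ^ (i : ℕ) * a ^ (j : ℕ) := by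
    intro x
    simp only [S, eval_finsetSum, eval_mul, eval_C, eval_pow, eval_X]
    exact sum_congr rfl fun i _ => sum_congr rfl fun j _ => by ring
  have hcancel : (X - C a) * S = (X - C a) * (g * C (q.eval a)) := Polynomial.funext fun x => by
    have hx := hh x a
    simp only [hp, eval_mul, eval_sub, eval_X, eval_C, sub_self, zero_mul, sub_zero] at hx
    simp only [eval_mul, eval_sub, eval_X, eval_C, hS, hx]
    ring
  rw [← hS, mul_left_cancel₀ (X_sub_C_ne_zero a) hcancel, eval_mul, eval_C]

theorem sum_coeff_mul_pow_eq_eval {R : Type*} [Semiring R] {P : R[X]} {n : ℕ}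
    (hP : P.natDegree < n) (x : R) : ∑ i : Fin n, P.coeff i * x ^ (i : ℕ) = P.eval x := by
  rw [eval_eq_sum_range' hP, Fin.sum_univ_eq_sum_range (fun i => P.coeff i * x ^ i)]

section RealVectors

variable {ι : Type*} [Fintype ι]

theorem re_sum_sum_ofReal_mul_conj (h : ι → ι → ℝ) (v : ι → ℝ) :
    (∑ i, ∑ j, (h i j : ℂ) * (v i : ℂ) * (starRingEnd ℂ) (v j : ℂ)).re
      = ∑ i, ∑ j, h i j * v i * v j := by
  simp only [Complex.conj_ofReal]
  norm_cast

theorem norm_sum_ofReal_mul_ofReal_sq (a v : ι → ℝ) :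
    ‖∑ i, (a i : ℂ) * (v i : ℂ)‖ ^ 2 = (∑ i, a i * v i) ^ 2 := by
  norm_cast
  rw [Real.norm_eq_abs, sq_abs]

end RealVectors

section Cofactor

variable {ι R : Type*} [Fintype ι] [DecidableEq ι] [CommRing R]

/-- The polynomial `pₖ` of the header. -/
noncomputable def cofactor (lam : ι → R) (k : ι) : R[X] :=
  ∏ j ∈ univ.erase k, (X - C (lam j))

theorem X_sub_C_mul_cofactor (lam : ι → R) (k : ι) :
    (X - C (lam k)) * cofactor lam k = ∏ j, (X - C (lam j)) :=
  mul_prod_erase _ _ (mem_univ k)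

theorem natDegree_cofactor [Nontrivial R] (lam : ι → R) (k : ι) :
    (cofactor lam k).natDegree = Fintype.card ι - 1 := by
  rw [cofactor, natDegree_finsetProd_X_sub_C_eq_card, card_erase_of_mem (mem_univ k), card_univ]

theorem eval_cofactor_self (lam : ι → R) (k : ι) :
    (cofactor lam k).eval (lam k) = ∏ j ∈ univ.erase k, (lam k - lam j) := by
  simp [cofactor, eval_prod]

theorem eval_cofactor_self_ne_zero [IsDomain R] {lam : ι → R} (hlam : Function.Injective lam)
    (k : ι) : (cofactor lam k).eval (lam k) ≠ 0 := by
  rw [eval_cofactor_self, prod_ne_zero_iff]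
  exact fun j hj => sub_ne_zero_of_ne fun e => ne_of_mem_erase hj (hlam e).symm

end Cofactor

theorem neg_one_pow_mul_eval_cofactor_self_pos {m : ℕ} {lam : Fin (m + 1) → ℝ}
    (hlam : StrictMono lam) (k : Fin (m + 1)) :
    0 < (-1) ^ (m - k) * (cofactor lam k).eval (lam k) := by
  have hcard : #(Ioi k) = m - k := by rw [Fin.card_Ioi]; omega
  have hIoi :
      ∏ j ∈ Ioi k, (lam k - lam j) = (-1) ^ (m - k) * ∏ j ∈ Ioi k, (lam j - lam k) := by
    rw [← hcard, ← prod_neg]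
    exact prod_congr rfl fun j _ => (neg_sub _ _).symm
  rw [eval_cofactor_self, ← compl_singleton, ← Ioi_disjUnion_Iio, prod_disjUnion, hIoi,
    ← mul_assoc, ← mul_assoc, ← pow_add, Even.neg_one_pow ⟨_, rfl⟩, one_mul]
  exact mul_pos (prod_pos fun j hj => sub_pos.mpr (hlam (mem_Ioi.mp hj)))
    (prod_pos fun j hj => sub_pos.mpr (hlam (mem_Iio.mp hj)))

theorem mul_neg_of_neg_one_pow_mul_pos {m : ℕ} {f : Fin (m + 1) → ℝ}
    (hf : ∀ k : Fin (m + 1), 0 < (-1) ^ (m - k) * f k) (k : Fin m) :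
    f k.castSucc * f k.succ < 0 := by
  have h₁ := hf k.castSucc
  have h₂ := hf k.succ
  rw [Fin.val_castSucc, show m - k = m - k.succ + 1 by simp only [Fin.val_succ]; omega,
    pow_succ] at h₁
  have hsq : ((-1 : ℝ) ^ (m - k.succ)) * (-1) ^ (m - k.succ) = 1 := by
    rw [← mul_pow]; norm_num
  nlinarith [mul_pos h₁ h₂]

theorem exists_mem_Ioo_eq_zero_of_mul_neg {α : Type*} [ConditionallyCompleteLinearOrder α]
    [TopologicalSpace α] [OrderTopology α] [DenselyOrdered α] {f : α → ℝ} {a b : α} (hab : a ≤ b)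
    (hf : ContinuousOn f (Set.Icc a b)) (hfab : f a * f b < 0) :
    ∃ x ∈ Set.Ioo a b, f x = 0 := by
  rcases mul_neg_iff.mp hfab with ⟨ha, hb⟩ | ⟨ha, hb⟩
  · exact intermediate_value_Ioo' hab hf ⟨hb, ha⟩
  · exact intermediate_value_Ioo hab hf ⟨ha, hb⟩

theorem strictMono_of_mem_Ioo_castSucc_succ {α : Type*} [Preorder α] {m : ℕ}
    {lam : Fin (m + 1) → α} (hlam : Monotone lam) {mu : Fin m → α}
    (hmu : ∀ k, mu k ∈ Set.Ioo (lam k.castSucc) (lam k.succ)) : StrictMono mu := by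
  intro k l hkl
  calc mu k < lam k.succ := (hmu k).2
    _ ≤ lam l.castSucc := hlam (Fin.succ_le_castSucc_iff.mpr hkl)
    _ < mu l := (hmu l).1

theorem eq_C_coeff_mul_prod_X_sub_C {R : Type*} [CommRing R] [IsDomain R] {m : ℕ} {q : R[X]}
    (hq : q.natDegree ≤ m) {mu : Fin m → R} (hmu : Function.Injective mu)
    (hroot : ∀ k, q.eval (mu k) = 0) : q = C (q.coeff m) * ∏ j, (X - C (mu j)) := by
  set r : R[X] := ∏ j, (X - C (mu j))
  have hr : r.natDegree = m := by simp [r]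
  have hrm : r.coeff m = 1 := hr ▸ (monic_prod_of_monic _ _ fun j _ => monic_X_sub_C (mu j))
  refine eq_of_degree_sub_lt_of_eval_index_eq univ hmu.injOn ?_ fun k _ => ?_
  · rw [card_univ, Fintype.card_fin, degree_lt_iff_coeff_zero]
    intro i hi
    rcases hi.eq_or_lt with rfl | hlt
    · rw [coeff_sub, coeff_C_mul, hrm, mul_one, sub_self]
    · rw [coeff_sub, coeff_C_mul, coeff_eq_zero_of_natDegree_lt (hq.trans_lt hlt),
        coeff_eq_zero_of_natDegree_lt (hr.trans_lt hlt), mul_zero, sub_zero]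
  · rw [hroot, eval_mul, eval_prod, prod_eq_zero (mem_univ k) (by simp), mul_zero]

/-- Converse for strictly hyperbolic `p` (degree `m+1`): if the Bézoutian form of `p`
and `q` (with `deg q ≤ m`) dominates `c Σ |p̂ₖ(z)|²`, then `q` is hyperbolic of degree
`m` with positive leading coefficient and its roots strictly interlace those of `p`. -/
theorem bezout_form_lower_bound_implies_interlacing (m : ℕ) (lam : Fin (m + 1) → ℝ)
    (hlam : StrictMono lam)
    (p q : Polynomial ℝ)
    (hp : p = ∏ j, (X - C (lam j)))
    (hqdeg : q.natDegree ≤ m)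
    (h : Fin (m + 1) → Fin (m + 1) → ℝ)
    (hh : ∀ x y : ℝ,
      (x - y) * ∑ i : Fin (m + 1), ∑ j : Fin (m + 1), h i j * x ^ (i : ℕ) * y ^ (j : ℕ)
        = p.eval x * q.eval y - p.eval y * q.eval x)
    (c : ℝ) (hc : 0 < c)
    (hineq : ∀ z : Fin (m + 1) → ℂ,
      c * ∑ k : Fin (m + 1),
          ‖∑ i : Fin (m + 1),
              (((∏ j ∈ Finset.univ.erase k, (X - C (lam j))).coeff i : ℝ) : ℂ) * z i‖ ^ 2
        ≤ (∑ i : Fin (m + 1), ∑ j : Fin (m + 1),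
            (h i j : ℂ) * z i * (starRingEnd ℂ) (z j)).re) :
    ∃ c' : ℝ, 0 < c' ∧ ∃ mu : Fin m → ℝ,
      q = C c' * ∏ j, (X - C (mu j)) ∧
      ∀ k : Fin m, lam k.castSucc < mu k ∧ mu k < lam k.succ := by
  have hform (x : ℝ) : c * ∑ k, (cofactor lam k).eval x ^ 2
      ≤ ∑ i : Fin (m + 1), ∑ j : Fin (m + 1), h i j * x ^ (i : ℕ) * x ^ (j : ℕ) := by
    have hdeg (k : Fin (m + 1)) : (cofactor lam k).natDegree < m + 1 := by
      rw [natDegree_cofactor, Fintype.card_fin]; omega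
    have hz : c * ∑ k, ‖∑ i : Fin (m + 1), (((cofactor lam k).coeff i : ℝ) : ℂ) * _‖ ^ 2 ≤ _ :=
      hineq fun i => ((x ^ (i : ℕ) : ℝ) : ℂ)
    simpa only [norm_sum_ofReal_mul_ofReal_sq, re_sum_sum_ofReal_mul_conj,
      sum_coeff_mul_pow_eq_eval (hdeg _)] using hz
  have hsign (k : Fin (m + 1)) : 0 < (-1) ^ (m - k) * q.eval (lam k) := by
    have hdiag :=
      bezout_sum_self_eq_of_eq_X_sub_C_mul h (hp.trans (X_sub_C_mul_cofactor lam k).symm) hh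
    have hne := eval_cofactor_self_ne_zero hlam.injective k
    have hpos : 0 < (cofactor lam k).eval (lam k) * q.eval (lam k) :=
      calc 0 < c * (cofactor lam k).eval (lam k) ^ 2 := by positivity
        _ ≤ c * ∑ j, (cofactor lam j).eval (lam k) ^ 2 := by
          gcongr
          exact single_le_sum (fun j _ => sq_nonneg ((cofactor lam j).eval (lam k))) (mem_univ k)
        _ ≤ _ := hdiag ▸ hform (lam k)
    nlinarith [neg_one_pow_mul_eval_cofactor_self_pos hlam k,
      sq_nonneg ((cofactor lam k).eval (lam k))]
  choose mu hmu hroot using fun k : Fin m =>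
    exists_mem_Ioo_eq_zero_of_mul_neg (hlam k.castSucc_lt_succ).le q.continuous.continuousOn
      (mul_neg_of_neg_one_pow_mul_pos hsign k)
  have hq := eq_C_coeff_mul_prod_X_sub_C hqdeg
    (strictMono_of_mem_Ioo_castSucc_succ hlam.monotone hmu).injective hroot
  set c' := q.coeff m
  have hlast : 0 < c' * ∏ j, (lam (Fin.last m) - mu j) := by
    have hs := hsign (Fin.last m)
    rw [hq] at hs
    simpa [eval_prod] using hs
  have hgap : 0 < ∏ j, (lam (Fin.last m) - mu j) := prod_pos fun j _ =>
    sub_pos.mpr ((hmu j).2.trans_le (hlam.monotone (Fin.le_last _)))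
  exact ⟨c', pos_of_mul_pos_left hlast hgap.le, mu, hq, hmu⟩
end

section
/- Let p be a monic hyperbolic polynomial of degree m. Then there exists c > 0 such that ĥ_{p,p'}(z,z̄) = Σ_{k=1}^m |p̂ₖ(z)|² ≥ c |p̂'(z)|² for all z ∈ ℂ^m. -/
/-!
With `pₖ = ∏_{j ≠ k} (X - λⱼ)` one has `p' = Σ pₖ` and, since `p = (X - λₖ) pₖ` for every `k`,
`p(x) p'(y) - p(y) p'(x) = (x - y) Σ pₖ(x) pₖ(y)`. Cancelling `x - y` (off the diagonal, then by
continuity) and comparing coefficients shows that the Bézoutian matrix is the Gram matrix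
`Σₖ coeff(pₖ)ᵢ coeff(pₖ)ⱼ` of real vectors, so its Hermitian form is `Σ |p̂ₖ(z)|²`. Finally
`p̂'(z) = Σ p̂ₖ(z)`, and Cauchy–Schwarz gives `|p̂'(z)|² ≤ m Σ |p̂ₖ(z)|²`, so `c = 1 / (m + 1)` works.
-/

open Polynomial BigOperators
open Finset Topology

namespace Polynomial

variable {R ι : Type*}

theorem derivative_prod_X_sub_C [CommRing R] [DecidableEq ι] (s : Finset ι) (f : ι → R) :
    derivative (∏ j ∈ s, (X - C (f j))) = ∑ k ∈ s, ∏ j ∈ s.erase k, (X - C (f j)) := by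
  simp [derivative_prod_finset]

theorem bezout_prod_X_sub_C [CommRing R] [DecidableEq ι] (s : Finset ι) (f : ι → R) (x y : R) :
    (∏ j ∈ s, (X - C (f j))).eval x * (derivative (∏ j ∈ s, (X - C (f j)))).eval y
        - (∏ j ∈ s, (X - C (f j))).eval y * (derivative (∏ j ∈ s, (X - C (f j)))).eval x
      = (x - y) * ∑ k ∈ s, (∏ j ∈ s.erase k, (X - C (f j))).eval x
          * (∏ j ∈ s.erase k, (X - C (f j))).eval y := by
  rw [derivative_prod_X_sub_C, eval_finsetSum, eval_finsetSum, mul_sum, mul_sum, mul_sum,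
    ← sum_sub_distrib]
  refine sum_congr rfl fun k hk => ?_
  simp only [← mul_prod_erase s _ hk, eval_mul, eval_sub, eval_X, eval_C]
  ring

theorem natDegree_prod_erase_X_sub_C_lt [CommRing R] [Nontrivial R] {m : ℕ} (f : Fin m → R)
    (k : Fin m) : (∏ j ∈ univ.erase k, (X - C (f j))).natDegree < m := by
  rw [natDegree_finsetProd_X_sub_C_eq_card, card_erase_of_mem (mem_univ k), card_univ,
    Fintype.card_fin]
  exact Nat.sub_lt k.pos one_pos

theorem eval_eq_sum_fin [Semiring R] {q : R[X]} {m : ℕ} (hq : q.natDegree < m) (x : R) :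
    q.eval x = ∑ i : Fin m, q.coeff i * x ^ (i : ℕ) := by
  rw [eval_eq_sum_range' hq, Fin.sum_univ_eq_sum_range (fun i => q.coeff i * x ^ i)]

theorem eq_of_forall_sum_mul_pow_eq [CommRing R] [IsDomain R] [Infinite R] {m : ℕ}
    {a b : Fin m → R} (h : ∀ x, ∑ i, a i * x ^ (i : ℕ) = ∑ i, b i * x ^ (i : ℕ)) : a = b := by
  have hpoly : ∑ i, C (a i) * X ^ (i : ℕ) = ∑ i, C (b i) * X ^ (i : ℕ) :=
    Polynomial.funext fun x => by simpa [eval_finsetSum] using h x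
  ext i
  simpa [finsetSum_coeff, coeff_C_mul_X_pow, Fin.val_inj] using congr_arg (coeff · i) hpoly

theorem eq_of_forall_sum_sum_mul_pow_mul_pow_eq [CommRing R] [IsDomain R] [Infinite R]
    {m n : ℕ} {a b : Fin m → Fin n → R}
    (h : ∀ x y, ∑ i, ∑ j, a i j * x ^ (i : ℕ) * y ^ (j : ℕ)
      = ∑ i, ∑ j, b i j * x ^ (i : ℕ) * y ^ (j : ℕ)) : a = b := by
  have hrow : ∀ y, (fun i => ∑ j, a i j * y ^ (j : ℕ)) = fun i => ∑ j, b i j * y ^ (j : ℕ) :=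
    fun y => eq_of_forall_sum_mul_pow_eq fun x => by
      simpa only [sum_mul, mul_right_comm _ (x ^ _)] using h x y
  ext i : 1
  exact eq_of_forall_sum_mul_pow_eq fun y => congr_fun (hrow y) i

end Polynomial

theorem eq_of_forall_sub_mul_eq {K : Type*} [Ring K] [NoZeroDivisors K] [TopologicalSpace K]
    [T2Space K] [∀ x : K, (𝓝[≠] x).NeBot] {f g : K → K} (hf : Continuous f) (hg : Continuous g)
    (y : K) (h : ∀ x, (x - y) * f x = (x - y) * g x) : f = g :=
  Continuous.ext_on (dense_compl_singleton y) hf hg fun x hx =>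
    mul_left_cancel₀ (sub_ne_zero.2 hx) (h x)

theorem sum_sum_gram_mul_mul {R ι κ : Type*} [CommSemiring R] [Fintype ι] [Fintype κ]
    (a : κ → ι → R) (u v : ι → R) :
    ∑ i, ∑ j, (∑ k, a k i * a k j) * u i * v j
      = ∑ k, (∑ i, a k i * u i) * ∑ j, a k j * v j := by
  simp only [sum_mul, mul_sum]
  exact (sum_congr rfl fun i _ => sum_comm).trans <| sum_comm.trans <| sum_congr rfl fun k _ =>
    sum_comm.trans <| sum_congr rfl fun j _ => sum_congr rfl fun i _ => by ring

theorem re_sum_sum_gram_mul_conj {ι κ : Type*} [Fintype ι] [Fintype κ] (a : κ → ι → ℝ)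
    (z : ι → ℂ) :
    (∑ i, ∑ j, ((∑ k, a k i * a k j : ℝ) : ℂ) * z i * (starRingEnd ℂ) (z j)).re
      = ∑ k, ‖∑ i, (a k i : ℂ) * z i‖ ^ 2 := by
  have hconj : ∀ k, ∑ j, (a k j : ℂ) * (starRingEnd ℂ) (z j)
      = (starRingEnd ℂ) (∑ j, (a k j : ℂ) * z j) := fun k => by simp [map_sum]
  push_cast
  rw [sum_sum_gram_mul_mul (fun k i => (a k i : ℂ))]
  simp only [hconj, Complex.mul_conj', ← Complex.ofReal_pow, ← Complex.ofReal_sum,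
    Complex.ofReal_re]

theorem norm_sum_sq_le_card_mul {E ι : Type*} [SeminormedAddCommGroup E] (s : Finset ι)
    (w : ι → E) : ‖∑ k ∈ s, w k‖ ^ 2 ≤ #s * ∑ k ∈ s, ‖w k‖ ^ 2 :=
  (pow_le_pow_left₀ (norm_nonneg _) (norm_sum_le s w) 2).trans (sq_sum_le_card_mul_sum_sq ..)

theorem bezoutian_prod_X_sub_C_coeff_eq_sum {m : ℕ} (lam : Fin m → ℝ) (h : Fin m → Fin m → ℝ)
    (hh : ∀ x y : ℝ,
      (x - y) * ∑ i : Fin m, ∑ j : Fin m, h i j * x ^ (i : ℕ) * y ^ (j : ℕ)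
        = (∏ j, (X - C (lam j))).eval x * (derivative (∏ j, (X - C (lam j)))).eval y
          - (∏ j, (X - C (lam j))).eval y * (derivative (∏ j, (X - C (lam j)))).eval x) :
    h = fun i j => ∑ k, (∏ j ∈ univ.erase k, (X - C (lam j))).coeff i
      * (∏ j ∈ univ.erase k, (X - C (lam j))).coeff j := by
  set q : Fin m → ℝ[X] := fun k => ∏ j ∈ univ.erase k, (X - C (lam j))
  have hform : ∀ x y, ∑ i, ∑ j, h i j * x ^ (i : ℕ) * y ^ (j : ℕ)
      = ∑ k, (q k).eval x * (q k).eval y := fun x y =>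
    congr_fun (eq_of_forall_sub_mul_eq (by fun_prop) (by fun_prop) y fun x =>
      (hh x y).trans (bezout_prod_X_sub_C _ _ x y)) x
  refine eq_of_forall_sum_sum_mul_pow_mul_pow_eq fun x y => ?_
  rw [hform, sum_sum_gram_mul_mul (fun k (i : Fin m) => (q k).coeff i)]
  simp only [q, eval_eq_sum_fin (natDegree_prod_erase_X_sub_C_lt lam _)]

/-- For monic hyperbolic `p`, the form of the Bézoutian of `p` and `p'` equals
`Σ |p̂ₖ(z)|²` and dominates `c |p̂'(z)|²` for some `c > 0`. -/
theorem bezout_form_p_pprime_bound (m : ℕ) (lam : Fin m → ℝ)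
    (p : Polynomial ℝ) (hp : p = ∏ j, (X - C (lam j)))
    (h : Fin m → Fin m → ℝ)
    (hh : ∀ x y : ℝ,
      (x - y) * ∑ i : Fin m, ∑ j : Fin m, h i j * x ^ (i : ℕ) * y ^ (j : ℕ)
        = p.eval x * (derivative p).eval y - p.eval y * (derivative p).eval x) :
    ∃ c > 0, ∀ z : Fin m → ℂ,
      (∑ i : Fin m, ∑ j : Fin m, (h i j : ℂ) * z i * (starRingEnd ℂ) (z j)).re
        = (∑ k : Fin m,
            ‖∑ i : Fin m,
                (((∏ j ∈ Finset.univ.erase k, (X - C (lam j))).coeff i : ℝ) : ℂ) * z i‖ ^ 2) ∧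
      c * ‖∑ i : Fin m, ((derivative p).coeff i : ℂ) * z i‖ ^ 2
        ≤ ∑ k : Fin m,
            ‖∑ i : Fin m,
                (((∏ j ∈ Finset.univ.erase k, (X - C (lam j))).coeff i : ℝ) : ℂ) * z i‖ ^ 2 := by
  subst hp
  obtain rfl := bezoutian_prod_X_sub_C_coeff_eq_sum lam h hh
  refine ⟨1 / (m + 1), by positivity, fun z => ⟨re_sum_sum_gram_mul_conj _ z, ?_⟩⟩
  set w : Fin m → ℂ := fun k => ∑ i : Fin m,
    (((∏ j ∈ univ.erase k, (X - C (lam j))).coeff i : ℝ) : ℂ) * z i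
  have hderiv : ∑ i : Fin m, ((derivative (∏ j, (X - C (lam j)) : ℝ[X])).coeff i : ℂ) * z i
      = ∑ k, w k := by
    simp only [derivative_prod_X_sub_C, finsetSum_coeff, Complex.ofReal_sum, sum_mul, w]
    exact sum_comm
  have hcs : ‖∑ k, w k‖ ^ 2 ≤ m * ∑ k, ‖w k‖ ^ 2 := by
    simpa using norm_sum_sq_le_card_mul univ w
  have hS : 0 ≤ ∑ k, ‖w k‖ ^ 2 := by positivity
  rw [hderiv, one_div_mul_eq_div, div_le_iff₀ (by positivity)]
  linarith
end

section
/- Let p be a monic hyperbolic polynomial of degree m, possibly with multiple roots, and let q be a real polynomial of degree m-1 with positive leading coefficient which separates p. Then there exists c > 0 such that ĥ_{p,q}(z,z̄) ≥ c Σ_{k=1}^m |p̂ₖ(z)|² for all z ∈ ℂ^m. -/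
/-!
Write `p = D N` and `q = D Q` with `N = ∏ (X - λⱼ)` the squarefree part of `p`,
`D = ∏ (X - λⱼ) ^ (rⱼ - 1)` and `Q = c ∏ (X - μⱼ)`. Lagrange interpolation at the simple roots of
`N` gives `Q = Σ wⱼ Nⱼ` with `Nⱼ = N / (X - λⱼ)` and `wⱼ = Q(λⱼ) / Nⱼ(λⱼ)`, and the interlacing
`λⱼ < μⱼ < λⱼ₊₁` makes every `wⱼ` positive. Hence
`p(x) q(y) - p(y) q(x) = (x - y) Σ wⱼ Sⱼ(x) Sⱼ(y)` with `Sⱼ = D Nⱼ = p / (X - λⱼ)`, so the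
Bézout matrix is `Σ wⱼ sⱼ sⱼᵀ` for the coefficient vectors `sⱼ` of the `Sⱼ`, and its Hermitian
form is `Σ wⱼ |sⱼ · z|²`. Every `p̂ₖ` is one of the `Sⱼ`, so `c' = min w / (m + 1)` works.
-/

open Polynomial Finset Filter Lagrange

section CoeffExtraction

variable {K : Type*} [CommRing K] [IsDomain K] [Infinite K] {m : ℕ}

theorem eq_zero_of_eventually_sum_mul_pow_eq_zero (g : Fin m → K)
    (hg : ∀ᶠ x in cofinite, ∑ i, g i * x ^ (i : ℕ) = 0) : g = 0 := by
  have hP : (∑ i, C (g i) * X ^ (i : ℕ) : K[X]) = 0 := by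
    refine eq_zero_of_infinite_isRoot _
      ((frequently_cofinite_iff_infinite.mp hg.frequently).mono fun x hx => ?_)
    simpa [eval_finsetSum] using hx
  funext k
  simpa [finsetSum_coeff, coeff_C_mul_X_pow, Fin.val_inj] using congrArg (coeff · k) hP

theorem eq_zero_of_sum_sum_mul_pow_eq_zero (g : Fin m → Fin m → K)
    (hg : ∀ x y, x ≠ y → ∑ i, ∑ j, g i j * x ^ (i : ℕ) * y ^ (j : ℕ) = 0) : g = 0 := by
  have hcol : ∀ x j, ∑ i, g i j * x ^ (i : ℕ) = 0 := by
    intro x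
    refine congrFun (eq_zero_of_eventually_sum_mul_pow_eq_zero _ ?_)
    filter_upwards [(Set.finite_singleton x).compl_mem_cofinite] with y hy
    rw [← hg x y (Ne.symm hy), Finset.sum_comm]
    simp [Finset.sum_mul]
  funext i j
  exact congrFun (eq_zero_of_eventually_sum_mul_pow_eq_zero (g · j) (.of_forall (hcol · j))) i

end CoeffExtraction

theorem Polynomial.eval_eq_sum_fin_s9 {R : Type*} [CommSemiring R] {m : ℕ} {S : R[X]}
    (hS : S.natDegree < m) (x : R) : S.eval x = ∑ i : Fin m, S.coeff i * x ^ (i : ℕ) := by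
  rw [eval_eq_sum_range' hS, Fin.sum_univ_eq_sum_range (fun i => S.coeff i * x ^ i)]

theorem sum_mul_eval_mul_eval_eq {R κ : Type*} [CommSemiring R] [Fintype κ] {m : ℕ}
    (w : κ → R) {S : κ → R[X]} (hS : ∀ l, (S l).natDegree < m) (x y : R) :
    ∑ l, w l * (S l).eval x * (S l).eval y =
      ∑ i : Fin m, ∑ j : Fin m,
        (∑ l, w l * (S l).coeff i * (S l).coeff j) * x ^ (i : ℕ) * y ^ (j : ℕ) := by
  simp only [eval_eq_sum_fin_s9 (hS _), Finset.mul_sum, Finset.sum_mul]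
  rw [Finset.sum_comm]
  conv_rhs => rw [Finset.sum_comm]
  refine sum_congr rfl fun j _ => ?_
  rw [Finset.sum_comm]
  exact sum_congr rfl fun i _ => sum_congr rfl fun l _ => by ring

theorem eq_sum_mul_coeff_mul_coeff_of_bezout {K κ : Type*} [Field K] [Infinite K] [Fintype κ]
    {m : ℕ} {h : Fin m → Fin m → K} {w : κ → K} {S : κ → K[X]} (hS : ∀ l, (S l).natDegree < m)
    (hh : ∀ x y, (x - y) * ∑ i, ∑ j, h i j * x ^ (i : ℕ) * y ^ (j : ℕ) =
      (x - y) * ∑ l, w l * (S l).eval x * (S l).eval y) (i j : Fin m) :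
    h i j = ∑ l, w l * (S l).coeff i * (S l).coeff j := by
  have hzero := eq_zero_of_sum_sum_mul_pow_eq_zero
    (fun i j => h i j - ∑ l, w l * (S l).coeff i * (S l).coeff j) fun x y hxy => by
      have hcancel := mul_left_cancel₀ (sub_ne_zero_of_ne hxy) (hh x y)
      rw [sum_mul_eval_mul_eval_eq w hS] at hcancel
      simp only [sub_mul, sum_sub_distrib, hcancel, sub_self]
  exact sub_eq_zero.mp (congrFun (congrFun hzero i) j)

namespace Lagrange

variable {F ι : Type*} [Field F] [DecidableEq ι] {s : Finset ι} {v : ι → F}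

theorem eq_sum_nodalWeight_mul_nodal_erase (hvs : Set.InjOn v s) {Q : F[X]}
    (hQ : Q.degree < #s) :
    Q = ∑ i ∈ s, C (Q.eval (v i) * nodalWeight s v i) * nodal (s.erase i) v := by
  conv_lhs => rw [eq_interpolate hvs hQ, interpolate_eq_nodalWeight_mul_nodal_div_X_sub_C]
  refine sum_congr rfl fun i hi => ?_
  rw [nodal_erase_eq_nodal_div hi, C_mul]
  ring

theorem eval_mul_nodal_bezout (hvs : Set.InjOn v s) (D : F[X]) {Q : F[X]}
    (hQ : Q.degree < #s) (x y : F) :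
    (D * nodal s v).eval x * (D * Q).eval y - (D * nodal s v).eval y * (D * Q).eval x =
      (x - y) * ∑ i ∈ s, Q.eval (v i) * nodalWeight s v i *
        (D * nodal (s.erase i) v).eval x * (D * nodal (s.erase i) v).eval y := by
  conv_lhs => rw [eq_sum_nodalWeight_mul_nodal_erase hvs hQ]
  simp only [eval_mul, eval_finsetSum, eval_C, Finset.mul_sum, ← Finset.sum_sub_distrib]
  refine sum_congr rfl fun i hi => ?_
  simp only [nodal_eq_mul_nodal_erase hi, eval_mul, eval_sub, eval_X, eval_C]
  ring

end Lagrange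

section Interlacing

variable {t : ℕ} {lam : Fin (t + 1) → ℝ} {mu : Fin t → ℝ}

theorem sub_div_sub_succAbove_pos (hlam : StrictMono lam)
    (hint : ∀ j : Fin t, lam j.castSucc < mu j ∧ mu j < lam j.succ) (l : Fin (t + 1))
    (i : Fin t) : 0 < (lam l - mu i) / (lam l - lam (l.succAbove i)) := by
  rcases lt_or_ge i.castSucc l with hil | hli
  · have hsucc : lam i.succ ≤ lam l := hlam.monotone (Fin.castSucc_lt_iff_succ_le.mp hil)
    rw [Fin.succAbove_of_castSucc_lt l i hil]
    exact div_pos (by linarith [(hint i).2]) (by linarith [hlam hil])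
  · have hcast : lam l ≤ lam i.castSucc := hlam.monotone hli
    rw [Fin.succAbove_of_le_castSucc l i hli]
    exact div_pos_of_neg_of_neg (by linarith [(hint i).1])
      (by linarith [hlam (Fin.castSucc_lt_succ (i := i))])

theorem eval_mul_nodalWeight_pos (hlam : StrictMono lam)
    (hint : ∀ j : Fin t, lam j.castSucc < mu j ∧ mu j < lam j.succ) {c : ℝ} (hc : 0 < c)
    (l : Fin (t + 1)) : 0 < (C c * nodal univ mu).eval (lam l) * nodalWeight univ lam l := by
  have hweight : nodalWeight univ lam l = ∏ i : Fin t, (lam l - lam (l.succAbove i))⁻¹ := by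
    rw [nodalWeight, ← compl_singleton, ← Fin.image_succAbove_univ,
      prod_image Fin.succAbove_right_injective.injOn]
  rw [hweight, eval_mul, eval_C, eval_nodal, mul_assoc, ← prod_mul_distrib]
  exact mul_pos hc (prod_pos fun i _ => sub_div_sub_succAbove_pos hlam hint l i)

end Interlacing

section Roots

variable {K ι : Type*} [Field K] [Fintype ι]

theorem exists_eq_of_eval_prod_X_sub_C_pow_eq_zero {lam : ι → K} {r : ι → ℕ} {x : K}
    (hx : (∏ j, (X - C (lam j)) ^ r j).eval x = 0) : ∃ j, x = lam j := by
  simp only [eval_prod, eval_pow, eval_sub, eval_X, eval_C, prod_eq_zero_iff] at hx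
  obtain ⟨j, -, hj⟩ := hx
  exact ⟨j, sub_eq_zero.mp (eq_zero_of_pow_eq_zero hj)⟩

theorem natDegree_lt_card_of_prod_X_sub_C_eq_mul {Lam : ι → K} {a : K} {S : K[X]}
    (hS : ∏ j, (X - C (Lam j)) = (X - C a) * S) : S.natDegree < Fintype.card ι := by
  have hdeg := natDegree_mul (X_sub_C_ne_zero a)
    (right_ne_zero_of_mul (hS ▸ nodal_eq univ Lam ▸ nodal_ne_zero))
  rw [← hS, natDegree_X_sub_C, ← nodal_eq, natDegree_nodal, card_univ] at hdeg
  omega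

theorem exists_prod_erase_X_sub_C_eq [DecidableEq ι] {κ : Type*} {Lam : ι → K} {lam : κ → K}
    {S : κ → K[X]} (hS : ∀ l, ∏ j, (X - C (Lam j)) = (X - C (lam l)) * S l)
    (hroot : ∀ k, ∃ l, Lam k = lam l) :
    ∃ σ : ι → κ, ∀ k, ∏ j ∈ univ.erase k, (X - C (Lam j)) = S (σ k) := by
  choose σ hσ using hroot
  refine ⟨σ, fun k => mul_left_cancel₀ (X_sub_C_ne_zero (Lam k)) ?_⟩
  rw [mul_prod_erase univ (fun j => X - C (Lam j)) (mem_univ k), hS, hσ]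

end Roots

theorem sum_sum_mul_conj_eq_sum_mul_norm_sq {ι κ : Type*} [Fintype ι] [Fintype κ]
    (w : κ → ℝ) (a : κ → ι → ℝ) (z : ι → ℂ) :
    ∑ i, ∑ j, ((∑ l, w l * a l i * a l j : ℝ) : ℂ) * z i * (starRingEnd ℂ) (z j) =
      ((∑ l, w l * ‖∑ i, (a l i : ℂ) * z i‖ ^ 2 : ℝ) : ℂ) := by
  push_cast
  simp only [← Complex.mul_conj', map_sum, map_mul, Complex.conj_ofReal, Finset.mul_sum,
    Finset.sum_mul]
  rw [Finset.sum_comm_cycle]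
  refine sum_congr rfl fun l _ => ?_
  rw [Finset.sum_comm]
  exact sum_congr rfl fun j _ => sum_congr rfl fun i _ => by ring

theorem exists_pos_mul_sum_comp_le_sum_mul {ι κ : Type*} [Fintype ι] [Fintype κ] [Nonempty κ]
    {w : κ → ℝ} (hw : ∀ l, 0 < w l) (σ : ι → κ) :
    ∃ c > 0, ∀ f : κ → ℝ, (∀ l, 0 ≤ f l) → c * ∑ k, f (σ k) ≤ ∑ l, w l * f l := by
  set wmin := univ.inf' univ_nonempty w
  have hwmin : 0 < wmin := (lt_inf'_iff _).mpr fun l _ => hw l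
  refine ⟨wmin / (Fintype.card ι + 1), by positivity, fun f hf => ?_⟩
  have hcomp : ∑ k, f (σ k) ≤ Fintype.card ι * ∑ l, f l := by
    simpa using sum_le_card_nsmul univ (f ∘ σ) _ fun k _ =>
      single_le_sum (fun l _ => hf l) (mem_univ (σ k))
  calc wmin / (Fintype.card ι + 1) * ∑ k, f (σ k)
      ≤ wmin / (Fintype.card ι + 1) * (Fintype.card ι * ∑ l, f l) := by gcongr
    _ ≤ wmin * ∑ l, f l := by
      rw [← mul_assoc]
      gcongr
      · exact sum_nonneg fun l _ => hf l
      · rw [div_mul_eq_mul_div, div_le_iff₀ (by positivity)]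
        nlinarith
    _ ≤ ∑ l, w l * f l := by
      rw [mul_sum]
      exact sum_le_sum fun l _ => mul_le_mul_of_nonneg_right (inf'_le _ (mem_univ l)) (hf l)

theorem bezout_form_lower_bound_general_general (t m : ℕ) (lam : Fin (t + 1) → ℝ)
    (hlam : StrictMono lam)
    (r : Fin (t + 1) → ℕ) (hr : ∀ j, 1 ≤ r j)
    (p : Polynomial ℝ) (hp : p = ∏ j, (X - C (lam j)) ^ (r j))
    (Lam : Fin m → ℝ) (hLam : p = ∏ j, (X - C (Lam j)))
    (mu : Fin t → ℝ) (hint : ∀ j : Fin t, lam j.castSucc < mu j ∧ mu j < lam j.succ)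
    (c : ℝ) (hc : 0 < c)
    (q : Polynomial ℝ)
    (hq : q = C c * (∏ j, (X - C (lam j)) ^ (r j - 1)) * ∏ j, (X - C (mu j)))
    (h : Fin m → Fin m → ℝ)
    (hh : ∀ x y : ℝ,
      (x - y) * ∑ i : Fin m, ∑ j : Fin m, h i j * x ^ (i : ℕ) * y ^ (j : ℕ)
        = p.eval x * q.eval y - p.eval y * q.eval x) :
    ∃ c' > 0, ∀ z : Fin m → ℂ,
      c' * ∑ k : Fin m,
          ‖∑ i : Fin m,
              (((∏ j ∈ Finset.univ.erase k, (X - C (Lam j))).coeff i : ℝ) : ℂ) * z i‖ ^ 2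
        ≤ (∑ i : Fin m, ∑ j : Fin m, (h i j : ℂ) * z i * (starRingEnd ℂ) (z j)).re := by
  classical
  set D : ℝ[X] := ∏ j, (X - C (lam j)) ^ (r j - 1)
  set Q : ℝ[X] := C c * nodal univ mu
  set S : Fin (t + 1) → ℝ[X] := fun l => D * nodal (univ.erase l) lam
  set w : Fin (t + 1) → ℝ := fun l => Q.eval (lam l) * nodalWeight univ lam l
  have hpD : p = D * nodal univ lam := by
    rw [hp, nodal_eq, ← prod_mul_distrib]
    exact prod_congr rfl fun j _ => (pow_sub_one_mul (Nat.one_le_iff_ne_zero.mp (hr j)) _).symm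
  have hqD : q = D * Q := by simp only [hq, Q, nodal_eq]; ring
  have hpS : ∀ l, p = (X - C (lam l)) * S l := fun l => by
    rw [hpD, nodal_eq_mul_nodal_erase (mem_univ l)]; ring
  have hQdeg : Q.degree < #(univ : Finset (Fin (t + 1))) := by
    rw [degree_C_mul hc.ne', degree_nodal, card_univ, card_univ, Fintype.card_fin,
      Fintype.card_fin]
    exact_mod_cast t.lt_succ_self
  have hcoeff : ∀ i j, h i j = ∑ l, w l * (S l).coeff i * (S l).coeff j :=
    eq_sum_mul_coeff_mul_coeff_of_bezout
      (fun l => (natDegree_lt_card_of_prod_X_sub_C_eq_mul (hLam ▸ hpS l)).trans_eq (by simp))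
      fun x y => by rw [hh, hpD, hqD, eval_mul_nodal_bezout hlam.injective.injOn D hQdeg]
  obtain ⟨σ, hσ⟩ := exists_prod_erase_X_sub_C_eq (hLam ▸ hpS) fun k =>
    exists_eq_of_eval_prod_X_sub_C_pow_eq_zero
      (hp ▸ hLam ▸ nodal_eq univ Lam ▸ eval_nodal_at_node (mem_univ k))
  obtain ⟨c', hc', hbound⟩ :=
    exists_pos_mul_sum_comp_le_sum_mul (w := w) (eval_mul_nodalWeight_pos hlam hint hc) σ
  refine ⟨c', hc', fun z => ?_⟩
  simp_rw [hcoeff, hσ, sum_sum_mul_conj_eq_sum_mul_norm_sq, Complex.ofReal_re]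
  exact hbound (fun l => ‖∑ i : Fin m, ((S l).coeff i : ℂ) * z i‖ ^ 2) fun _ => sq_nonneg _

/-- For a monic hyperbolic `p` (possibly with multiple roots) and a separating `q`
with positive leading coefficient, the Bézoutian form dominates `c Σ |p̂ₖ(z)|²`. -/
theorem bezout_form_lower_bound_general (t m : ℕ) (lam : Fin (t + 1) → ℝ)
    (hlam : StrictMono lam)
    (r : Fin (t + 1) → ℕ) (hr : ∀ j, 1 ≤ r j) (hm : m = ∑ j, r j)
    (p : Polynomial ℝ) (hp : p = ∏ j, (X - C (lam j)) ^ (r j))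
    (Lam : Fin m → ℝ) (hLam : p = ∏ j, (X - C (Lam j)))
    (mu : Fin t → ℝ) (hint : ∀ j : Fin t, lam j.castSucc < mu j ∧ mu j < lam j.succ)
    (c : ℝ) (hc : 0 < c)
    (q : Polynomial ℝ)
    (hq : q = C c * (∏ j, (X - C (lam j)) ^ (r j - 1)) * ∏ j, (X - C (mu j)))
    (h : Fin m → Fin m → ℝ)
    (hh : ∀ x y : ℝ,
      (x - y) * ∑ i : Fin m, ∑ j : Fin m, h i j * x ^ (i : ℕ) * y ^ (j : ℕ)
        = p.eval x * q.eval y - p.eval y * q.eval x) :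
    ∃ c' > 0, ∀ z : Fin m → ℂ,
      c' * ∑ k : Fin m,
          ‖∑ i : Fin m,
              (((∏ j ∈ Finset.univ.erase k, (X - C (Lam j))).coeff i : ℝ) : ℂ) * z i‖ ^ 2
        ≤ (∑ i : Fin m, ∑ j : Fin m, (h i j : ℂ) * z i * (starRingEnd ℂ) (z j)).re :=
  bezout_form_lower_bound_general_general t m lam hlam r hr p hp Lam hLam mu hint c hc q hq h hh
end

section
/- Let p be a monic hyperbolic polynomial of degree m and q a real polynomial of degree m-1 such that the Bézoutian form satisfies ĥ_{p,q}(z,z̄) ≥ c Σ_{k=1}^m |p̂ₖ(z)|² for some c > 0 and all z ∈ ℂ^m. Then q is hyperbolic with positive leading coefficient and q separates p. -/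
/-!
On the real line the diagonal of the Bézoutian is the Wronskian `W = p' q - p q'`, so the
lower bound gives `W ≥ c p̂ₖ²`; hence `W > 0` off the roots of `p`, and there
`(q / p)' = -W / p² < 0`. If `ζ` were a non-real root of `q`, then so would be `ζ̄`, the form
would vanish at `(ζⁱ)ᵢ`, and the lower bound would force `p̂ₖ(ζ) = 0`, making `ζ` a root of `p`;
so `q` is hyperbolic. Its roots off the `λⱼ` are simple, as `W = -p q' ≠ 0` there. Since `q / p`
is strictly decreasing on every interval free of roots of `p` and tends to `0` at `±∞`, these
roots lie in `(λ₁, λₛ)`, at most one in each gap, and `q > 0` beyond `λₛ`. At `λⱼ` the order of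
`q` is below `rⱼ`: otherwise `W` would vanish to order `2rⱼ - 1` there, more than
`c p² ≤ (x - λⱼ)² W` allows. As `deg q = m - 1 = Σ (rⱼ - 1) + (s - 1)`, all these bounds are
attained.
-/

open Polynomial BigOperators Filter Set Topology Finset ComplexConjugate

theorem StrictAntiOn.lt_of_tendsto_atTop {α β : Type*} [LinearOrder α] [NoMaxOrder α]
    [TopologicalSpace β] [LinearOrder β] [OrderClosedTopology β] {f : α → β} {a : α} {b : β}
    (hf : StrictAntiOn f (Ioi a)) (hlim : Tendsto f atTop (𝓝 b)) {x : α} (hx : a < x) :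
    b < f x := by
  obtain ⟨y, hxy⟩ := exists_gt x
  have hy : a < y := hx.trans hxy
  have : Nonempty α := ⟨x⟩
  refine lt_of_le_of_lt (le_of_tendsto hlim ?_) (hf hx hy hxy)
  filter_upwards [eventually_gt_atTop y] with z hz using (hf hy (hy.trans hz) hz).le

theorem StrictAntiOn.lt_of_tendsto_atBot {α β : Type*} [LinearOrder α] [NoMinOrder α]
    [TopologicalSpace β] [LinearOrder β] [OrderClosedTopology β] {f : α → β} {a : α} {b : β}
    (hf : StrictAntiOn f (Iio a)) (hlim : Tendsto f atBot (𝓝 b)) {x : α} (hx : x < a) :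
    f x < b := by
  obtain ⟨y, hyx⟩ := exists_lt x
  have hy : y < a := hyx.trans hx
  have : Nonempty α := ⟨x⟩
  refine lt_of_lt_of_le (hf hy hx hyx) (ge_of_tendsto hlim ?_)
  filter_upwards [eventually_lt_atBot y] with z hz using (hf (hz.trans hy) hy hz).le

theorem Fin.exists_mem_Ico_of_le_of_lt {α : Type*} [LinearOrder α] :
    ∀ {t : ℕ} (lam : Fin (t + 1) → α) {x : α}, lam 0 ≤ x → x < lam (Fin.last t) →
      ∃ j : Fin t, x ∈ Ico (lam j.castSucc) (lam j.succ)
  | 0, _, _, h0, hlast => absurd h0 (not_le.2 hlast)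
  | t + 1, lam, x, h0, hlast => by
    by_cases hx : x < lam (Fin.last t).castSucc
    · obtain ⟨j, hj⟩ := Fin.exists_mem_Ico_of_le_of_lt (lam ∘ Fin.castSucc) h0 hx
      exact ⟨j.castSucc, by rw [Fin.succ_castSucc]; exact hj⟩
    · exact ⟨Fin.last t, not_lt.1 hx, by simpa using hlast⟩

namespace Polynomial

section Bezoutian

variable {K : Type*} [CommRing K] {m : ℕ}

/-- `h` is the coefficient matrix of the Bézoutian `h_{p,q}(x, y)`. -/
def IsBezoutMatrix (p q : K[X]) (h : Fin m → Fin m → K) : Prop :=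
  ∀ x y : K, (x - y) * ∑ i : Fin m, ∑ j : Fin m, h i j * x ^ (i : ℕ) * y ^ (j : ℕ)
    = p.eval x * q.eval y - p.eval y * q.eval x

/-- Over an infinite domain the defining identity is an identity of polynomials in two
variables, so it holds in every algebra. -/
theorem IsBezoutMatrix.aeval_identity [IsDomain K] [Infinite K] {A : Type*} [CommRing A]
    [Algebra K A] {p q : K[X]} {h : Fin m → Fin m → K} (hh : IsBezoutMatrix p q h) (a b : A) :
    (a - b) * ∑ i : Fin m, ∑ j : Fin m, algebraMap K A (h i j) * a ^ (i : ℕ) * b ^ (j : ℕ)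
      = aeval a p * aeval b q - aeval b p * aeval a q := by
  let x : MvPolynomial (Fin 2) K := MvPolynomial.X 0
  let y : MvPolynomial (Fin 2) K := MvPolynomial.X 1
  let P := (x - y) * ∑ i : Fin m, ∑ j : Fin m, MvPolynomial.C (h i j) * x ^ (i : ℕ) * y ^ (j : ℕ)
    - (aeval x p * aeval y q - aeval y p * aeval x q)
  have hP : P = 0 := MvPolynomial.funext fun v => by
    change MvPolynomial.aeval v P = MvPolynomial.aeval v 0
    simp only [P, x, y, map_sub, map_mul, map_sum, map_pow, MvPolynomial.aeval_X,
      MvPolynomial.aeval_C, ← aeval_algHom_apply, map_zero]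
    simp [hh (v 0) (v 1)]
  have := congrArg (MvPolynomial.aeval ![a, b]) hP
  simp only [P, x, y, map_sub, map_mul, map_sum, map_pow, MvPolynomial.aeval_X,
    MvPolynomial.aeval_C, ← aeval_algHom_apply, map_zero] at this
  simpa [sub_eq_zero] using this

theorem eval_eq_eval_derivative_of_X_sub_C_mul {F G : K[X]} {x : K} (h : (X - C x) * F = G) :
    F.eval x = (derivative G).eval x := by
  subst h
  simp [derivative_mul]

theorem IsBezoutMatrix.diag_eq_wronskian [IsDomain K] [Infinite K] {p q : K[X]}
    {h : Fin m → Fin m → K} (hh : IsBezoutMatrix p q h) (x : K) :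
    ∑ i : Fin m, ∑ j : Fin m, h i j * x ^ (i : ℕ) * x ^ (j : ℕ) = (wronskian q p).eval x := by
  have hid := hh.aeval_identity (X : K[X]) (C x)
  simp only [← algebraMap_eq, aeval_algebraMap_apply] at hid
  have := eval_eq_eval_derivative_of_X_sub_C_mul hid
  simp only [eval_finsetSum, eval_mul, eval_pow, eval_X, algebraMap_eq, eval_C] at this
  rw [this, wronskian]
  simp only [aeval_X_left_apply, coe_aeval_eq_eval, derivative_sub, derivative_mul,
    derivative_C, mul_zero, add_zero, zero_mul, zero_add, eval_sub, eval_mul, eval_C]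
  ring

theorem sum_fin_algebraMap_coeff_mul_pow {A : Type*} [CommRing A] [Algebra K A] {f : K[X]}
    (hf : f.natDegree < m) (a : A) :
    ∑ i : Fin m, algebraMap K A (f.coeff i) * a ^ (i : ℕ) = aeval a f := by
  rw [aeval_eq_sum_range' hf, ← Fin.sum_univ_eq_sum_range]
  simp [Algebra.smul_def]

end Bezoutian

theorem pow_two_mul_sub_one_dvd_wronskian {R : Type*} [CommRing R] {p q g : R[X]} {n : ℕ}
    (hp : g ^ n ∣ p) (hq : g ^ n ∣ q) : g ^ (2 * n - 1) ∣ wronskian p q := by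
  rcases n.eq_zero_or_pos with rfl | hn
  · simp
  have hsplit : g ^ (2 * n - 1) = g ^ n * g ^ (n - 1) := by rw [← pow_add]; congr 1; omega
  rw [wronskian, hsplit]
  exact dvd_sub (mul_dvd_mul hp (pow_sub_one_dvd_derivative_of_pow_dvd hq))
    (mul_comm (g ^ n) _ ▸ mul_dvd_mul (pow_sub_one_dvd_derivative_of_pow_dvd hp) hq)

theorem rootMultiplicity_le_one_of_eval_wronskian_ne_zero {R : Type*} [CommRing R]
    {p q : R[X]} {x : R} (hW : (wronskian q p).eval x ≠ 0) : q.rootMultiplicity x ≤ 1 := by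
  by_contra! h1
  have hq0 : q.IsRoot x := isRoot_iterate_derivative_of_lt_rootMultiplicity (n := 0) (by omega)
  have hq1 : (derivative q).IsRoot x := isRoot_iterate_derivative_of_lt_rootMultiplicity h1
  simp [wronskian, hq0.eq_zero, hq1.eq_zero] at hW

theorem rootMultiplicity_prod_X_sub_C_pow {R ι : Type*} [CommRing R] [IsDomain R] [Fintype ι]
    {lam : ι → R} (hlam : Function.Injective lam) (r : ι → ℕ) (i : ι) :
    (∏ j, (X - C (lam j)) ^ r j).rootMultiplicity (lam i) = r i := by
  classical
  have hne : (∏ j ∈ univ.erase i, (X - C (lam j)) ^ r j).eval (lam i) ≠ 0 := by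
    simp only [eval_prod, eval_pow, eval_sub, eval_X, eval_C]
    exact prod_ne_zero_iff.2 fun j hj =>
      pow_ne_zero _ (sub_ne_zero.2 (hlam.ne (ne_of_mem_erase hj).symm))
  rw [← prod_erase_mul _ _ (mem_univ i),
    rootMultiplicity_mul_X_sub_C_pow (fun h => hne (by rw [h, eval_zero])),
    rootMultiplicity_eq_zero hne, zero_add]

theorem eq_C_leadingCoeff_mul_of_pow_rootMultiplicity_dvd {K : Type*} [Field K] {q D : K[X]}
    (hq : q.Splits) (hD : D.Monic) (hdeg : D.natDegree ≤ q.natDegree)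
    (hdvd : ∀ x, (X - C x) ^ q.rootMultiplicity x ∣ D) : q = C q.leadingCoeff * D := by
  classical
  have hroots : q.roots ≤ D.roots := Multiset.le_iff_count.2 fun x => by
    rw [count_roots, count_roots]
    exact (le_rootMultiplicity_iff hD.ne_zero).2 (hdvd x)
  have hprod := (Multiset.prod_X_sub_C_dvd_iff_le_roots hD.ne_zero _).2 hroots
  have := eq_of_monic_of_dvd_of_natDegree_le
    (monic_multiset_prod_of_monic _ _ fun a _ => monic_X_sub_C a) hD hprod
    (by rwa [natDegree_multiset_prod_X_sub_C_eq_card, ← hq.natDegree_eq_card_roots])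
  conv_lhs => rw [hq.eq_prod_roots, ← this]

theorem eq_C_leadingCoeff_mul_prod_of_rootMultiplicity_le {K : Type*} [Field K] {t : ℕ}
    {lam : Fin (t + 1) → K} {r : Fin (t + 1) → ℕ} {μ : Fin t → K} {q : K[X]} (hq : q.Splits)
    (hr : ∀ j, 1 ≤ r j) (hdeg : q.natDegree = (∑ j, r j) - 1)
    (hmult : ∀ j, q.rootMultiplicity (lam j) ≤ r j - 1)
    (hsimple : ∀ x, (∀ j, lam j ≠ x) → q.rootMultiplicity x ≤ 1)
    (hμ : ∀ x, q.IsRoot x → (∀ j, lam j ≠ x) → ∃ j, μ j = x) :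
    q = C q.leadingCoeff * (∏ j, (X - C (lam j)) ^ (r j - 1)) * ∏ j, (X - C (μ j)) := by
  have hmonic₁ : (∏ j, (X - C (lam j)) ^ (r j - 1)).Monic :=
    monic_prod_of_monic _ _ fun j _ => (monic_X_sub_C _).pow _
  have hmonic₂ : (∏ j, (X - C (μ j))).Monic := monic_prod_of_monic _ _ fun j _ => monic_X_sub_C _
  rw [mul_assoc]
  refine eq_C_leadingCoeff_mul_of_pow_rootMultiplicity_dvd hq (hmonic₁.mul hmonic₂) ?_ fun x => ?_
  · have hsum : ∑ j, (r j - 1) + ∑ _j : Fin (t + 1), 1 = ∑ j, r j := by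
      rw [← sum_add_distrib]
      exact sum_congr rfl fun j _ => Nat.sub_add_cancel (hr j)
    rw [hmonic₁.natDegree_mul hmonic₂,
      natDegree_prod_of_monic _ _ fun j _ => (monic_X_sub_C _).pow _,
      natDegree_finsetProd_X_sub_C_eq_card, hdeg]
    simp only [natDegree_pow, natDegree_X_sub_C, mul_one, sum_const, card_univ,
      Fintype.card_fin, smul_eq_mul] at hsum ⊢
    omega
  · by_cases hx : ∃ j, lam j = x
    · obtain ⟨j, rfl⟩ := hx
      have hdvd : (X - C (lam j)) ^ (r j - 1) ∣ ∏ i, (X - C (lam i)) ^ (r i - 1) :=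
        dvd_prod_of_mem (fun i => (X - C (lam i)) ^ (r i - 1)) (mem_univ j)
      exact dvd_mul_of_dvd_left ((pow_dvd_pow _ (hmult j)).trans hdvd) _
    push Not at hx
    rcases Nat.le_one_iff_eq_zero_or_eq_one.1 (hsimple x hx) with h0 | h1
    · rw [h0, pow_zero]
      exact one_dvd _
    · obtain ⟨j, rfl⟩ := hμ x (rootMultiplicity_pos'.1 (by omega)).2 hx
      rw [h1, pow_one]
      exact dvd_mul_of_dvd_right (dvd_prod_of_mem (fun i => X - C (μ i)) (mem_univ j)) _

theorem pow_rootMultiplicity_not_dvd_of_abs_eval_le {A B : ℝ[X]} (hA : A ≠ 0) (a : ℝ)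
    (hAB : ∀ x, |A.eval x| ≤ |B.eval x|) : ¬ (X - C a) ^ (A.rootMultiplicity a + 1) ∣ B := by
  obtain ⟨A₁, hA₁, hA₁a⟩ := A.exists_eq_pow_rootMultiplicity_mul_and_not_dvd hA a
  rintro ⟨B₁, hB₁⟩
  have hle (x : ℝ) (hx : x ≠ a) : |A₁.eval x| ≤ |x - a| * |B₁.eval x| := by
    have hpos : 0 < |x - a| ^ A.rootMultiplicity a := pow_pos (abs_pos.2 (sub_ne_zero.2 hx)) _
    have := hAB x
    rw [hA₁, hB₁] at this
    simp only [eval_mul, eval_pow, eval_sub, eval_X, eval_C, abs_mul, abs_pow, pow_succ] at this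
    nlinarith
  have hclosed := isClosed_le (continuous_const (y := (0 : ℝ)))
    (by fun_prop : Continuous fun x => |x - a| * |B₁.eval x| - |A₁.eval x|)
  have : (0 : ℝ) ≤ |a - a| * |B₁.eval a| - |A₁.eval a| :=
    hclosed.closure_subset_iff.2 (fun x hx => sub_nonneg.2 (hle x hx))
      ((dense_compl_singleton a).closure_eq ▸ mem_univ a)
  rw [dvd_iff_isRoot] at hA₁a
  simp only [sub_self, abs_zero, zero_mul, zero_sub, neg_nonneg, abs_nonpos_iff] at this
  exact hA₁a this

theorem leadingCoeff_pos_of_eventually_pos {P : ℝ[X]} (h : ∀ᶠ x in atTop, 0 < P.eval x) :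
    0 < P.leadingCoeff := by
  by_contra! hlc
  rcases le_or_gt P.degree 0 with hd | hd
  · obtain ⟨x, hx⟩ := h.exists
    rw [eq_C_of_degree_le_zero hd, eval_C] at hx
    rw [leadingCoeff, natDegree_eq_zero_iff_degree_le_zero.2 hd] at hlc
    exact hlc.not_gt hx
  · obtain ⟨x, h1, h2⟩ := (h.and ((P.tendsto_atBot_of_leadingCoeff_nonpos hd hlc).eventually
      (eventually_le_atBot 0))).exists
    exact h2.not_gt h1

section QuotientMonotone

variable {p q : ℝ[X]}

theorem strictAntiOn_eval_div_eval {S : Set ℝ} (hS : Convex ℝ S)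
    (hp : ∀ x ∈ S, p.eval x ≠ 0) (hW : ∀ x ∈ S, 0 < (wronskian q p).eval x) :
    StrictAntiOn (fun x => q.eval x / p.eval x) S := by
  refine strictAntiOn_of_deriv_neg hS
    (q.continuous.continuousOn.div p.continuous.continuousOn hp) fun x hx => ?_
  have hx := interior_subset hx
  rw [((q.hasDerivAt x).fun_div (p.hasDerivAt x) (hp x hx)).deriv]
  have := hW x hx
  simp only [wronskian, eval_sub, eval_mul] at this
  exact div_neg_of_neg_of_pos (by linarith) (sq_pos_of_ne_zero (hp x hx))

theorem eval_div_eval_pos_of_lt {a : ℝ} (hdeg : q.degree < p.degree)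
    (hp : ∀ x, a < x → p.eval x ≠ 0) (hW : ∀ x, a < x → 0 < (wronskian q p).eval x) {x : ℝ}
    (hx : a < x) : 0 < q.eval x / p.eval x :=
  (strictAntiOn_eval_div_eval (convex_Ioi a) hp hW).lt_of_tendsto_atTop
    (div_tendsto_atTop_zero_of_degree_lt q p hdeg) hx

theorem eval_div_eval_neg_of_lt {a : ℝ} (hdeg : q.degree < p.degree)
    (hp : ∀ x, x < a → p.eval x ≠ 0) (hW : ∀ x, x < a → 0 < (wronskian q p).eval x) {x : ℝ}
    (hx : x < a) : q.eval x / p.eval x < 0 :=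
  (strictAntiOn_eval_div_eval (convex_Iio a) hp hW).lt_of_tendsto_atBot
    (div_tendsto_atBot_zero_of_degree_lt q p hdeg) hx

theorem leadingCoeff_pos_of_eval_wronskian_pos (hp : p.Monic) (hdeg : q.degree < p.degree)
    (hW : ∀ x, p.eval x ≠ 0 → 0 < (wronskian q p).eval x) : 0 < q.leadingCoeff := by
  obtain ⟨a, ha⟩ := eventually_atTop.1 (eventually_atTop_not_isRoot p hp.ne_zero)
  have hpa (x : ℝ) (hx : a < x) : p.eval x ≠ 0 := ha x hx.le
  have hqp : ∀ᶠ x in atTop, 0 < (q * p).eval x := (eventually_gt_atTop a).mono fun x hx => by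
    have := eval_div_eval_pos_of_lt hdeg hpa (fun y hy => hW y (hpa y hy)) hx
    rwa [eval_mul, mul_pos_iff, ← div_pos_iff]
  simpa [hp.leadingCoeff] using leadingCoeff_pos_of_eventually_pos hqp

variable {t : ℕ} {lam : Fin (t + 1) → ℝ}

theorem exists_mem_Ioo_of_isRoot (hlam : Monotone lam)
    (hroots : ∀ x, p.eval x = 0 → ∃ j, lam j = x) (hdeg : q.degree < p.degree)
    (hW : ∀ x, p.eval x ≠ 0 → 0 < (wronskian q p).eval x) {x : ℝ} (hx : q.IsRoot x)
    (hne : ∀ j, lam j ≠ x) : ∃ j : Fin t, x ∈ Ioo (lam j.castSucc) (lam j.succ) := by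
  have hp (y : ℝ) (hy : ∀ j, lam j ≠ y) : p.eval y ≠ 0 := fun h0 =>
    let ⟨j, hj⟩ := hroots y h0; hy j hj
  have hqx : q.eval x / p.eval x = 0 := by rw [hx.eq_zero, zero_div]
  have h0 : lam 0 ≤ x := by
    by_contra! hlt
    have hbelow (y : ℝ) (hy : y < lam 0) : p.eval y ≠ 0 :=
      hp y fun j => (hy.trans_le (hlam (Fin.zero_le j))).ne'
    exact (eval_div_eval_neg_of_lt hdeg hbelow (fun y hy => hW y (hbelow y hy)) hlt).ne hqx
  have hlast : x < lam (Fin.last t) := by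
    refine lt_of_le_of_ne (not_lt.1 fun hlt => ?_) (hne _).symm
    have habove (y : ℝ) (hy : lam (Fin.last t) < y) : p.eval y ≠ 0 :=
      hp y fun j => ((hlam (Fin.le_last j)).trans_lt hy).ne
    exact (eval_div_eval_pos_of_lt hdeg habove (fun y hy => hW y (habove y hy)) hlt).ne' hqx
  obtain ⟨j, hj₁, hj₂⟩ := Fin.exists_mem_Ico_of_le_of_lt lam h0 hlast
  exact ⟨j, lt_of_le_of_ne hj₁ (hne _), hj₂⟩

theorem exists_forall_isRoot_eq (hlam : StrictMono lam)
    (hroots : ∀ x, p.eval x = 0 → ∃ j, lam j = x) (hdeg : q.degree < p.degree)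
    (hW : ∀ x, p.eval x ≠ 0 → 0 < (wronskian q p).eval x) :
    ∃ μ : Fin t → ℝ, (∀ j, lam j.castSucc < μ j ∧ μ j < lam j.succ) ∧
      ∀ x, q.IsRoot x → (∀ j, lam j ≠ x) → ∃ j, μ j = x := by
  have hgap (j : Fin t) : ∃ y ∈ Ioo (lam j.castSucc) (lam j.succ),
      ∀ x ∈ Ioo (lam j.castSucc) (lam j.succ), q.IsRoot x → x = y := by
    have hp (x : ℝ) (hx : x ∈ Ioo (lam j.castSucc) (lam j.succ)) : p.eval x ≠ 0 := fun h0 => by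
      obtain ⟨l, rfl⟩ := hroots x h0
      exact (Fin.castSucc_lt_iff_succ_le.1 (hlam.lt_iff_lt.1 hx.1)).not_gt (hlam.lt_iff_lt.1 hx.2)
    have hinj := (strictAntiOn_eval_div_eval (convex_Ioo _ _) hp fun x hx => hW x (hp x hx)).injOn
    by_cases hex : ∃ y ∈ Ioo (lam j.castSucc) (lam j.succ), q.IsRoot y
    · obtain ⟨y, hy, hqy⟩ := hex
      exact ⟨y, hy, fun x hx hqx => hinj hx hy (by simp [hqx.eq_zero, hqy.eq_zero])⟩
    · push Not at hex
      obtain ⟨y, hy⟩ := exists_between (hlam (Fin.castSucc_lt_succ (i := j)))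
      exact ⟨y, hy, fun x hx hqx => absurd hqx (hex x hx)⟩
  choose μ hμ huniq using hgap
  refine ⟨μ, hμ, fun x hx hne => ?_⟩
  obtain ⟨j, hj⟩ := exists_mem_Ioo_of_isRoot hlam.monotone hroots hdeg hW hx hne
  exact ⟨j, (huniq j x hj hx).symm⟩

end QuotientMonotone

section LowerBound

variable {m : ℕ} {p q : ℝ[X]} {h : Fin m → Fin m → ℝ} {c : ℝ} {Lam : Fin m → ℝ}

theorem mul_norm_sq_aeval_le_re_sum (hc : 0 ≤ c)
    (hineq : ∀ z : Fin m → ℂ,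
      c * ∑ k : Fin m,
          ‖∑ i : Fin m,
              (((∏ j ∈ univ.erase k, (X - C (Lam j))).coeff i : ℝ) : ℂ) * z i‖ ^ 2
        ≤ (∑ i : Fin m, ∑ j : Fin m, (h i j : ℂ) * z i * conj (z j)).re)
    (k : Fin m) (ζ : ℂ) :
    c * ‖aeval ζ (∏ j ∈ univ.erase k, (X - C (Lam j)))‖ ^ 2
      ≤ (∑ i : Fin m, ∑ j : Fin m, (h i j : ℂ) * ζ ^ (i : ℕ) * conj ζ ^ (j : ℕ)).re := by
  have hsum (l : Fin m) : ∑ i : Fin m,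
      (((∏ j ∈ univ.erase l, (X - C (Lam j))).coeff i : ℝ) : ℂ) * ζ ^ (i : ℕ)
        = aeval ζ (∏ j ∈ univ.erase l, (X - C (Lam j))) := by
    have := sum_fin_algebraMap_coeff_mul_pow (A := ℂ)
      (f := ∏ j ∈ univ.erase l, (X - C (Lam j))) (m := m)
      (by simp [card_erase_of_mem, Nat.sub_lt (Fin.pos l)]) ζ
    rwa [Complex.coe_algebraMap] at this
  have := hineq fun i => ζ ^ (i : ℕ)
  simp only [map_pow, hsum] at this
  refine le_trans ?_ this
  gcongr
  exact single_le_sum (f := fun l => ‖aeval ζ (∏ j ∈ univ.erase l, (X - C (Lam j)))‖ ^ 2)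
    (fun _ _ => by positivity) (mem_univ k)

theorem eval_sq_le_eval_wronskian (hh : IsBezoutMatrix p q h)
    (hcoer : ∀ (k : Fin m) (ζ : ℂ), c * ‖aeval ζ (∏ j ∈ univ.erase k, (X - C (Lam j)))‖ ^ 2
      ≤ (∑ i : Fin m, ∑ j : Fin m, (h i j : ℂ) * ζ ^ (i : ℕ) * conj ζ ^ (j : ℕ)).re)
    (k : Fin m) (x : ℝ) :
    c * (∏ j ∈ univ.erase k, (X - C (Lam j))).eval x ^ 2 ≤ (wronskian q p).eval x := by
  have := hcoer k x
  rw [← hh.diag_eq_wronskian]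
  rw [Complex.conj_ofReal, ← Complex.coe_algebraMap,
    aeval_algebraMap_apply_eq_algebraMap_eval, Complex.coe_algebraMap] at this
  norm_cast at this
  simpa [sq_abs] using this

theorem IsBezoutMatrix.splits [NeZero m] (hh : IsBezoutMatrix p q h) (hc : 0 < c)
    (hcoer : ∀ (k : Fin m) (ζ : ℂ), c * ‖aeval ζ (∏ j ∈ univ.erase k, (X - C (Lam j)))‖ ^ 2
      ≤ (∑ i : Fin m, ∑ j : Fin m, (h i j : ℂ) * ζ ^ (i : ℕ) * conj ζ ^ (j : ℕ)).re) :
    q.Splits := by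
  refine Splits.of_splits_map (algebraMap ℝ ℂ) (IsAlgClosed.splits _) fun ζ hζ => ?_
  rw [mem_roots', IsRoot, eval_map_algebraMap] at hζ
  by_contra hreal
  have hconj : conj ζ ≠ ζ := fun h => hreal (by
    obtain ⟨x, rfl⟩ := Complex.conj_eq_iff_real.1 h
    exact ⟨x, rfl⟩)
  have hζ' : aeval (conj ζ) q = 0 := by
    rw [← Complex.conjAe_coe, aeval_algHom_apply, hζ.2, map_zero]
  have hform := hh.aeval_identity ζ (conj ζ)
  rw [hζ.2, hζ', mul_zero, mul_zero, sub_zero, mul_eq_zero] at hform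
  have h0 := hcoer 0 ζ
  simp only [Complex.coe_algebraMap, sub_eq_zero, hconj.symm, false_or] at hform
  rw [hform, Complex.zero_re] at h0
  have hpk : aeval ζ (∏ j ∈ univ.erase 0, (X - C (Lam j))) = 0 := by
    have : ‖aeval ζ (∏ j ∈ univ.erase 0, (X - C (Lam j)))‖ ^ 2 ≤ 0 := by nlinarith
    exact norm_eq_zero.1 (pow_eq_zero_iff two_ne_zero |>.1 (le_antisymm this (sq_nonneg _)))
  simp only [map_prod, map_sub, aeval_X, aeval_C, prod_eq_zero_iff, sub_eq_zero] at hpk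
  obtain ⟨j, -, rfl⟩ := hpk
  exact hreal ⟨Lam j, rfl⟩

theorem eval_wronskian_pos_of_eval_ne_zero [NeZero m] (hLam : p = ∏ j, (X - C (Lam j)))
    (hc : 0 < c)
    (hWge : ∀ k x, c * (∏ j ∈ univ.erase k, (X - C (Lam j))).eval x ^ 2 ≤ (wronskian q p).eval x)
    {x : ℝ} (hx : p.eval x ≠ 0) : 0 < (wronskian q p).eval x := by
  refine lt_of_lt_of_le (mul_pos hc (sq_pos_of_ne_zero fun h0 => hx ?_)) (hWge 0 x)
  rw [hLam, ← prod_erase_mul _ _ (mem_univ 0), eval_mul, h0, zero_mul]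

theorem rootMultiplicity_lt_of_eval_sq_le (hLam : p = ∏ j, (X - C (Lam j))) (hc : 0 < c)
    (hWge : ∀ k x, c * (∏ j ∈ univ.erase k, (X - C (Lam j))).eval x ^ 2 ≤ (wronskian q p).eval x)
    {a : ℝ} (ha : p.IsRoot a) : q.rootMultiplicity a < p.rootMultiplicity a := by
  obtain ⟨k, -, hk⟩ : ∃ k ∈ univ, a - Lam k = 0 := by
    rw [IsRoot, hLam, eval_prod] at ha
    simpa using prod_eq_zero_iff.1 ha
  have hpk : p = (∏ j ∈ univ.erase k, (X - C (Lam j))) * (X - C a) := by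
    rw [hLam, ← prod_erase_mul _ _ (mem_univ k), sub_eq_zero.1 hk]
  have hp0 : p ≠ 0 := hLam ▸ (monic_prod_of_monic _ _ fun j _ => monic_X_sub_C (Lam j)).ne_zero
  have hA : C c * p ^ 2 ≠ 0 := mul_ne_zero (C_ne_zero.2 hc.ne') (pow_ne_zero 2 hp0)
  have hdom (x : ℝ) : |(C c * p ^ 2).eval x| ≤ |((X - C a) ^ 2 * wronskian q p).eval x| := by
    have := hWge k x
    have hW0 : 0 ≤ (wronskian q p).eval x := le_trans (by positivity) this
    have hpx : p.eval x = (∏ j ∈ univ.erase k, (X - C (Lam j))).eval x * (x - a) := by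
      rw [hpk, eval_mul, eval_sub, eval_X, eval_C]
    simp only [eval_mul, eval_pow, eval_C, eval_sub, eval_X, hpx]
    rw [abs_of_nonneg (by positivity), abs_of_nonneg (by positivity)]
    nlinarith [sq_nonneg (x - a)]
  have hmult : (C c * p ^ 2).rootMultiplicity a = 2 * p.rootMultiplicity a := by
    rw [rootMultiplicity_mul hA, rootMultiplicity_C, sq,
      rootMultiplicity_mul (mul_ne_zero hp0 hp0)]
    ring
  by_contra! hle
  have hr : 0 < p.rootMultiplicity a := (rootMultiplicity_pos hp0).2 ha
  have hW := pow_two_mul_sub_one_dvd_wronskian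
    (dvd_trans (pow_dvd_pow _ hle) (pow_rootMultiplicity_dvd q a)) (pow_rootMultiplicity_dvd p a)
  refine pow_rootMultiplicity_not_dvd_of_abs_eval_le hA a hdom ?_
  rw [hmult, show 2 * p.rootMultiplicity a + 1 = 2 + (2 * p.rootMultiplicity a - 1) by omega,
    pow_add]
  exact mul_dvd_mul_left _ hW

end LowerBound

end Polynomial

/-- Converse in the general (multiple-root) case: if the Bézoutian form of a monic
hyperbolic `p` and a real `q` of degree `m-1` dominates `c Σ |p̂ₖ(z)|²`, then `q` is
hyperbolic with positive leading coefficient and separates `p`. -/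
theorem bezout_lower_bound_implies_separation (t m : ℕ) (lam : Fin (t + 1) → ℝ)
    (hlam : StrictMono lam)
    (r : Fin (t + 1) → ℕ) (hr : ∀ j, 1 ≤ r j) (hm : m = ∑ j, r j)
    (p : Polynomial ℝ) (hp : p = ∏ j, (X - C (lam j)) ^ (r j))
    (Lam : Fin m → ℝ) (hLam : p = ∏ j, (X - C (Lam j)))
    (q : Polynomial ℝ) (hqdeg : q.natDegree = m - 1)
    (h : Fin m → Fin m → ℝ)
    (hh : ∀ x y : ℝ,
      (x - y) * ∑ i : Fin m, ∑ j : Fin m, h i j * x ^ (i : ℕ) * y ^ (j : ℕ)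
        = p.eval x * q.eval y - p.eval y * q.eval x)
    (c : ℝ) (hc : 0 < c)
    (hineq : ∀ z : Fin m → ℂ,
      c * ∑ k : Fin m,
          ‖∑ i : Fin m,
              (((∏ j ∈ Finset.univ.erase k, (X - C (Lam j))).coeff i : ℝ) : ℂ) * z i‖ ^ 2
        ≤ (∑ i : Fin m, ∑ j : Fin m, (h i j : ℂ) * z i * (starRingEnd ℂ) (z j)).re) :
    ∃ c' : ℝ, 0 < c' ∧ ∃ mu : Fin t → ℝ,
      (∀ j : Fin t, lam j.castSucc < mu j ∧ mu j < lam j.succ) ∧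
      q = C c' * (∏ j, (X - C (lam j)) ^ (r j - 1)) * ∏ j, (X - C (mu j)) := by
  have : NeZero m := ⟨by
    have := single_le_sum (fun j _ => Nat.zero_le (r j)) (mem_univ 0)
    have := hr 0
    omega⟩
  have hcoer := mul_norm_sq_aeval_le_re_sum hc.le hineq
  have hWge := eval_sq_le_eval_wronskian hh hcoer
  have hW (x : ℝ) (hx : p.eval x ≠ 0) := eval_wronskian_pos_of_eval_ne_zero hLam hc hWge hx
  have hmonic : p.Monic := hLam ▸ monic_prod_of_monic _ _ fun j _ => monic_X_sub_C (Lam j)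
  have hdeg : q.degree < p.degree := degree_lt_degree (by simp [hLam, hqdeg, NeZero.pos m])
  have hroots (x : ℝ) (hx : p.eval x = 0) : ∃ j, lam j = x := by
    rw [hp, eval_prod, prod_eq_zero_iff] at hx
    obtain ⟨j, -, hj⟩ := hx
    rw [eval_pow, eval_sub, eval_X, eval_C] at hj
    exact ⟨j, (sub_eq_zero.1 (eq_zero_of_pow_eq_zero hj)).symm⟩
  obtain ⟨mu, hmu, hmu_roots⟩ := exists_forall_isRoot_eq hlam hroots hdeg hW
  refine ⟨q.leadingCoeff, leadingCoeff_pos_of_eval_wronskian_pos hmonic hdeg hW, mu, hmu,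
    eq_C_leadingCoeff_mul_prod_of_rootMultiplicity_le (IsBezoutMatrix.splits hh hc hcoer) hr
      (hm ▸ hqdeg) (fun j => ?_) (fun x hx => rootMultiplicity_le_one_of_eval_wronskian_ne_zero
        (hW x fun h0 => let ⟨j, hj⟩ := hroots x h0; hx j hj).ne') hmu_roots⟩
  have hmult : p.rootMultiplicity (lam j) = r j :=
    hp ▸ rootMultiplicity_prod_X_sub_C_pow hlam.injective r j
  have := rootMultiplicity_lt_of_eval_sq_le hLam hc hWge
    ((rootMultiplicity_pos hmonic.ne_zero).1 (hmult ▸ hr j))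
  omega
end

section
/- Let p be a monic hyperbolic polynomial of degree m, A its Sylvester (companion) matrix, and H the Bézout matrix of p and p'. Then H is nonnegative definite, HA is symmetric, and det H is the discriminant of p. -/
/-!
With `q_k = ∏_{j ≠ k} (X - λ_j)` we have `p = (X - λ_k) q_k` and `p' = ∑_k q_k`, so the Bézoutian
`(p(x) p'(y) - p(y) p'(x)) / (x - y)` equals `∑_k q_k(x) q_k(y)`: `H = Vᵀ V`, where row `k` of `V`
holds the coefficients of `q_k`. Hence `H` is positive semidefinite. Since `X q_k ≡ λ_k q_k` modulo
`p`, row `k` of `V` is a left eigenvector of `A` for `λ_k`, so `H A = Vᵀ diag(λ) V` is symmetric.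
Finally `V Wᵀ = diag(q_k(λ_k))` for the Vandermonde matrix `W`, which gives
`det V = ∏_{i<j} (λ_i - λ_j)` and `det H = (det V)²`.
-/

open Polynomial BigOperators

/-- The companion (Sylvester) matrix of a monic polynomial `p` of degree `m`. -/
noncomputable def companionMatrix (m : ℕ) (p : Polynomial ℝ) : Matrix (Fin m) (Fin m) ℝ :=
  Matrix.of fun i j =>
    if (i : ℕ) + 1 = (j : ℕ) then 1 else if (i : ℕ) = m - 1 then -p.coeff (j : ℕ) else 0

open Finset Matrix Lagrange

section PowerSums

variable {R : Type*} [CommRing R] [IsDomain R]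

theorem eq_zero_of_sum_mul_pow_eq_zero {n : ℕ} (c : Fin n → R) {s : Set R} (hs : s.Infinite)
    (h : ∀ x ∈ s, ∑ i, c i * x ^ (i : ℕ) = 0) : c = 0 := by
  have hP : ∑ i, C (c i) * X ^ (i : ℕ) = 0 :=
    eq_zero_of_infinite_isRoot _ <| hs.mono fun x hx => by
      simpa [IsRoot, eval_finsetSum] using h x hx
  funext i
  simpa [finsetSum_coeff, coeff_C_mul_X_pow, Fin.val_inj] using congrArg (coeff · i) hP

theorem eq_zero_of_sum_sum_mul_pow_mul_pow_eq_zero [Infinite R] {n n' : ℕ}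
    (c : Matrix (Fin n) (Fin n') R)
    (h : ∀ x y, x ≠ y → ∑ i, ∑ j, c i j * x ^ (i : ℕ) * y ^ (j : ℕ) = 0) : c = 0 := by
  have hrow : ∀ y, (fun i => ∑ j, c i j * y ^ (j : ℕ)) = 0 := fun y =>
    eq_zero_of_sum_mul_pow_eq_zero _ (Set.finite_singleton y).infinite_compl fun x hx => by
      rw [← h x y hx]
      simp only [sum_mul]
      exact sum_congr rfl fun i _ => sum_congr rfl fun j _ => by ring
  funext i
  exact eq_zero_of_sum_mul_pow_eq_zero _ Set.infinite_univ fun y _ => congrFun (hrow y) i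

end PowerSums

theorem Polynomial.eval_eq_sum_fin_s15 {R : Type*} [CommSemiring R] {p : R[X]} {n : ℕ}
    (hn : p.natDegree < n) (x : R) : p.eval x = ∑ i : Fin n, p.coeff i * x ^ (i : ℕ) := by
  rw [eval_eq_sum_range' hn, Fin.sum_univ_eq_sum_range (fun i => p.coeff i * x ^ i)]

theorem Lagrange.sub_mul_sum_eval_nodal_erase {R ι : Type*} [CommRing R] [DecidableEq ι]
    (s : Finset ι) (v : ι → R) (x y : R) :
    (x - y) * ∑ k ∈ s, (nodal (s.erase k) v).eval x * (nodal (s.erase k) v).eval y =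
      (nodal s v).eval x * (derivative (nodal s v)).eval y -
        (nodal s v).eval y * (derivative (nodal s v)).eval x := by
  rw [derivative_nodal, eval_finsetSum, eval_finsetSum, mul_sum, mul_sum, mul_sum,
    ← sum_sub_distrib]
  refine sum_congr rfl fun k hk => ?_
  simp only [nodal_eq_mul_nodal_erase hk, eval_mul, eval_sub, eval_X, eval_C]
  ring

section NodalErase

variable {R : Type*} [CommRing R] {m : ℕ} (v : Fin m → R)

noncomputable def nodalEraseMatrix : Matrix (Fin m) (Fin m) R :=
  Matrix.of fun k i => (nodal (univ.erase k) v).coeff i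

theorem natDegree_nodal_erase_lt [Nontrivial R] (k : Fin m) :
    (nodal (univ.erase k) v).natDegree < m := by
  rw [natDegree_nodal, card_erase_of_mem (mem_univ k), card_univ, Fintype.card_fin]
  exact Nat.sub_lt k.pos one_pos

theorem nodalEraseMatrix_mulVec_pow [Nontrivial R] (x : R) :
    nodalEraseMatrix v *ᵥ (fun i : Fin m => x ^ (i : ℕ)) =
      fun k => (nodal (univ.erase k) v).eval x := by
  funext k
  rw [eval_eq_sum_fin_s15 (natDegree_nodal_erase_lt v k)]
  rfl

theorem sum_sum_transpose_nodalEraseMatrix_mul_self [Nontrivial R] (x y : R) :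
    ∑ i, ∑ j, ((nodalEraseMatrix v)ᵀ * nodalEraseMatrix v) i j * x ^ (i : ℕ) * y ^ (j : ℕ) =
      ∑ k, (nodal (univ.erase k) v).eval x * (nodal (univ.erase k) v).eval y := by
  have hform : ∀ M : Matrix (Fin m) (Fin m) R,
      ∑ i, ∑ j, M i j * x ^ (i : ℕ) * y ^ (j : ℕ) =
        (fun i : Fin m => x ^ (i : ℕ)) ⬝ᵥ M *ᵥ (fun j : Fin m => y ^ (j : ℕ)) := fun M => by
    simp only [dotProduct, mulVec, mul_sum]
    exact sum_congr rfl fun i _ => sum_congr rfl fun j _ => by ring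
  rw [hform, ← mulVec_mulVec, dotProduct_mulVec, vecMul_transpose,
    nodalEraseMatrix_mulVec_pow, nodalEraseMatrix_mulVec_pow]
  rfl

theorem nodalEraseMatrix_mul_vandermonde_transpose [Nontrivial R] :
    nodalEraseMatrix v * (vandermonde v)ᵀ =
      diagonal fun k => ∏ j ∈ univ.erase k, (v k - v j) := by
  ext k l
  have hcol : (nodalEraseMatrix v * (vandermonde v)ᵀ) k l = (nodal (univ.erase k) v).eval (v l) :=
    congrFun (nodalEraseMatrix_mulVec_pow v (v l)) k
  rw [hcol]
  obtain rfl | hkl := eq_or_ne k l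
  · rw [eval_nodal, diagonal_apply_eq]
  · rw [eval_nodal_at_node (mem_erase.mpr ⟨hkl.symm, mem_univ l⟩), diagonal_apply_ne _ hkl]

theorem prod_prod_erase_sub_eq_mul_det_vandermonde :
    ∏ k, ∏ j ∈ univ.erase k, (v k - v j) =
      (∏ i, ∏ j ∈ Ioi i, (v i - v j)) * (vandermonde v).det := by
  rw [det_vandermonde, ← prod_mul_distrib]
  simp_rw [← prod_mul_distrib, ← compl_singleton]
  exact (prod_prod_Ioi_mul_eq_prod_prod_off_diag fun a b => v b - v a).symm

theorem nodal_erase_eq_of_eq [IsDomain R] {a b : Fin m} (hab : v a = v b) :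
    nodal (univ.erase a) v = nodal (univ.erase b) v := by
  refine mul_left_cancel₀ (X_sub_C_ne_zero (v a)) ?_
  rw [← nodal_eq_mul_nodal_erase (mem_univ a), hab, ← nodal_eq_mul_nodal_erase (mem_univ b)]

theorem det_nodalEraseMatrix [IsDomain R] :
    (nodalEraseMatrix v).det = ∏ i, ∏ j ∈ Ioi i, (v i - v j) := by
  by_cases hv : Function.Injective v
  · refine mul_right_cancel₀ (det_vandermonde_ne_zero_iff.mpr hv) ?_
    rw [← det_transpose (vandermonde v), ← det_mul, nodalEraseMatrix_mul_vandermonde_transpose,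
      det_diagonal, det_transpose, prod_prod_erase_sub_eq_mul_det_vandermonde]
  · obtain ⟨a, b, hab, hne⟩ : ∃ a b, v a = v b ∧ a ≠ b := by
      simpa [Function.Injective] using hv
    have hrow : nodalEraseMatrix v a = nodalEraseMatrix v b := funext fun i => by
      simp only [nodalEraseMatrix, of_apply, nodal_erase_eq_of_eq v hab]
    rw [det_zero_of_row_eq hne hrow, eq_comm]
    simp only [prod_eq_zero_iff, sub_eq_zero, mem_Ioi, mem_univ, true_and]
    rcases hne.lt_or_gt with h | h
    exacts [⟨a, b, h, hab⟩, ⟨b, a, h, hab.symm⟩]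

end NodalErase

/-- For monic `p` of degree `m` this is multiplication by `X` modulo `p`. -/
theorem vecMul_companionMatrix {m : ℕ} (q p : ℝ[X]) :
    (fun i : Fin m => q.coeff i) ᵥ* companionMatrix m p =
      fun j => (X * q - C (q.coeff (m - 1)) * p).coeff j := by
  funext j
  have hj := j.isLt
  have hsplit : ∀ l ∈ range m, q.coeff l *
      (if l + 1 = (j : ℕ) then 1 else if l = m - 1 then -p.coeff j else 0) =
        (if l + 1 = (j : ℕ) then q.coeff l else 0) +
          (if l = m - 1 then -(q.coeff (m - 1) * p.coeff j) else 0) := fun l hl => by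
    have := mem_range.mp hl
    split_ifs <;> first | omega | simp_all
  simp only [vecMul, dotProduct, companionMatrix, of_apply]
  rw [Fin.sum_univ_eq_sum_range (fun l => q.coeff l *
      (if l + 1 = (j : ℕ) then 1 else if l = m - 1 then -p.coeff j else 0)) m,
    sum_congr rfl hsplit, sum_add_distrib, sum_ite_eq' (range m) (m - 1),
    if_pos (mem_range.mpr (by omega)), coeff_sub, coeff_C_mul]
  obtain h0 | ⟨a, ha⟩ : (j : ℕ) = 0 ∨ ∃ a, (j : ℕ) = a + 1 := by
    cases (j : ℕ) <;> simp
  · simp [h0, sub_eq_add_neg]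
  · simp only [ha, add_left_inj, sum_ite_eq', mem_range, coeff_X_mul]
    rw [if_pos (by omega), sub_eq_add_neg]

theorem nodalEraseMatrix_mul_companionMatrix {m : ℕ} (v : Fin m → ℝ) :
    nodalEraseMatrix v * companionMatrix m (nodal univ v) = diagonal v * nodalEraseMatrix v := by
  ext k j
  have hmonic : (nodal (univ.erase k) v).coeff (m - 1) = 1 := by
    simpa [card_erase_of_mem] using (nodal_monic (s := univ.erase k) (v := v)).coeff_natDegree
  have hrow : (nodalEraseMatrix v * companionMatrix m (nodal univ v)) k j =
      (X * nodal (univ.erase k) v - C 1 * nodal univ v).coeff j := by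
    rw [← hmonic]
    exact congrFun (vecMul_companionMatrix _ _) j
  rw [hrow, diagonal_mul, nodal_eq_mul_nodal_erase (mem_univ k), C_1, one_mul, ← sub_mul,
    sub_sub_cancel, coeff_C_mul]
  rfl

theorem eq_transpose_nodalEraseMatrix_mul_self {R : Type*} [CommRing R] [IsDomain R]
    [Infinite R] {m : ℕ} (v : Fin m → R) (H : Matrix (Fin m) (Fin m) R)
    (hH : ∀ x y : R, (x - y) * ∑ i, ∑ j, H i j * x ^ (i : ℕ) * y ^ (j : ℕ) =
      (nodal univ v).eval x * (derivative (nodal univ v)).eval y -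
        (nodal univ v).eval y * (derivative (nodal univ v)).eval x) :
    H = (nodalEraseMatrix v)ᵀ * nodalEraseMatrix v := by
  rw [← sub_eq_zero]
  refine eq_zero_of_sum_sum_mul_pow_mul_pow_eq_zero _ fun x y hxy => ?_
  refine mul_left_cancel₀ (sub_ne_zero.mpr hxy) ?_
  simp only [Matrix.sub_apply, sub_mul _ _ (y ^ _), sub_mul _ _ (x ^ _), sum_sub_distrib]
  rw [mul_sub, hH, sum_sum_transpose_nodalEraseMatrix_mul_self, sub_mul_sum_eval_nodal_erase,
    sub_self, mul_zero]

/-- For a monic hyperbolic `p`, the Bézout matrix `H` of `p` and `p'` is positive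
semidefinite, `H·A` is symmetric (`A` the companion matrix of `p`), and `det H` is
the discriminant `∏_{i<j}(Λᵢ-Λⱼ)²` of `p`. -/
theorem bezout_matrix_p_pprime (m : ℕ) (Lam : Fin m → ℝ)
    (p : Polynomial ℝ) (hp : p = ∏ j, (X - C (Lam j)))
    (H : Matrix (Fin m) (Fin m) ℝ)
    (hH : ∀ x y : ℝ,
      (x - y) * ∑ i : Fin m, ∑ j : Fin m, H i j * x ^ (i : ℕ) * y ^ (j : ℕ)
        = p.eval x * (derivative p).eval y - p.eval y * (derivative p).eval x) :
    H.PosSemidef ∧ (H * companionMatrix m p).IsSymm ∧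
      H.det = ∏ i : Fin m, ∏ j ∈ Finset.Ioi i, (Lam i - Lam j) ^ 2 := by
  obtain rfl : p = nodal univ Lam := hp
  obtain rfl := eq_transpose_nodalEraseMatrix_mul_self Lam H hH
  refine ⟨?_, ?_, ?_⟩
  · simpa only [conjTranspose_eq_transpose_of_trivial] using
      posSemidef_conjTranspose_mul_self (nodalEraseMatrix Lam)
  · rw [IsSymm, Matrix.mul_assoc, nodalEraseMatrix_mul_companionMatrix]
    simp only [transpose_mul, diagonal_transpose, transpose_transpose, Matrix.mul_assoc]
  · simp_rw [det_mul, det_transpose, det_nodalEraseMatrix, ← sq, prod_pow]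
end

section
/- Let p be a monic hyperbolic polynomial of degree m and for ε > 0 define its Nuij approximation p_ε(ζ) = (1 + ε d/dζ)^{m-1} p(ζ). Then p_ε is strictly hyperbolic, and writing p_ε(ζ) = ∏_{j=1}^m (ζ - λⱼ(ε)) with λ₁(ε) ≤ ⋯ ≤ λ_m(ε), there is a constant c > 0 depending only on m such that λ_{k+1}(ε) - λ_k(ε) ≥ c·ε for all k = 1,...,m-1 and all ε > 0. -/
/-!
For `P = ∏ (X - s j)` and `x` not a root of `P`, `(P + ε P')(x) = P(x) (1 + ε F(x))` with
`F(x) = ∑ 1 / (x - s j)`. At a non-real `z` the imaginary part of `F(z)` is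
`-Im z ∑ 1 / |z - s j|²`, so `P + ε P'` has only real roots. On every interval free of the `s j`
the function `F` is strictly decreasing, and between consecutive poles it runs from `+∞` to `-∞`;
hence the roots of `P + ε P'` interlace those of `P`, with one extra root to the left.
Quantitatively, if the first `k` gaps of the ordered `s` are at least `δ ≤ ε`, then near `s t`
(for `t ≤ k`) the pole term dominates the `m - 1` others, which keeps the roots of `P + ε P'`
below `s t` at distance `δ / (4m)` from it; so the first `k + 1` gaps of `P + ε P'` are at least
`δ / (4m)`. Starting from `k = 0` and applying this `m - 1` times gives `c = (4m)^{-(m-1)}`.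
-/

open Polynomial Finset

noncomputable def nuijStep {R : Type*} [Semiring R] (ε : R) (q : R[X]) : R[X] :=
  q + C ε * derivative q

theorem map_nuijStep {R S : Type*} [Semiring R] [Semiring S] (f : R →+* S) (ε : R) (q : R[X]) :
    (nuijStep ε q).map f = nuijStep (f ε) (q.map f) := by
  simp [nuijStep, derivative_map]

theorem degree_C_mul_derivative_lt {R : Type*} [CommRing R] [Nontrivial R] {q : R[X]}
    (hq : q.Monic) (ε : R) : degree (C ε * derivative q) < degree q :=
  calc degree (C ε * derivative q) ≤ degree (C ε) + degree (derivative q) := degree_mul_le _ _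
    _ ≤ 0 + degree (derivative q) := add_le_add_left degree_C_le _
    _ < degree q := by simpa using degree_derivative_lt hq.ne_zero

theorem monic_nuijStep {R : Type*} [CommRing R] [Nontrivial R] {q : R[X]} (hq : q.Monic)
    (ε : R) : (nuijStep ε q).Monic :=
  hq.add_of_left (degree_C_mul_derivative_lt hq ε)

theorem natDegree_nuijStep {R : Type*} [CommRing R] [Nontrivial R] {q : R[X]} (hq : q.Monic)
    (ε : R) : (nuijStep ε q).natDegree = q.natDegree :=
  natDegree_add_eq_left_of_degree_lt (degree_C_mul_derivative_lt hq ε)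

theorem eval_derivative_prod_X_sub_C_self {R ι : Type*} [CommRing R] [Fintype ι]
    [DecidableEq ι] (s : ι → R) (i : ι) :
    eval (s i) (derivative (∏ j, (X - C (s j)))) = ∏ j ∈ univ.erase i, (s i - s j) := by
  rw [derivative_prod_finset, eval_finsetSum, sum_eq_single i]
  · simp [eval_prod]
  · intro j _ hji
    simpa [eval_prod] using prod_eq_zero (mem_erase.2 ⟨Ne.symm hji, mem_univ i⟩) (sub_self (s i))
  · simp

theorem eval_derivative_prod_X_sub_C_eq_zero {R ι : Type*} [CommRing R] [Fintype ι]
    {ν : ι → R} {i j : ι} (hij : i ≠ j) (h : ν i = ν j) :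
    eval (ν i) (derivative (∏ l, (X - C (ν l)))) = 0 := by
  classical
  rw [eval_derivative_prod_X_sub_C_self]
  exact prod_eq_zero (mem_erase.2 ⟨hij.symm, mem_univ j⟩) (by rw [h, sub_self])

section Field

variable {K ι : Type*} [Field K] [Fintype ι] {s : ι → K} {x : K}

theorem eval_prod_X_sub_C_eq_zero_iff : eval x (∏ j, (X - C (s j))) = 0 ↔ ∃ l, s l = x := by
  simp [eval_prod, prod_eq_zero_iff, sub_eq_zero, @eq_comm _ (s _)]

theorem eval_prod_X_sub_C_ne_zero (hx : ∀ j, x ≠ s j) : eval x (∏ j, (X - C (s j))) ≠ 0 := by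
  simpa [eval_prod, prod_ne_zero_iff, sub_eq_zero] using hx

theorem eval_derivative_prod_X_sub_C_of_ne (hx : ∀ j, x ≠ s j) :
    eval x (derivative (∏ j, (X - C (s j)))) =
      eval x (∏ j, (X - C (s j))) * ∑ j, (x - s j)⁻¹ := by
  classical
  simp only [derivative_prod_finset, derivative_X_sub_C, mul_one, eval_finsetSum, eval_prod,
    eval_sub, eval_X, eval_C, mul_sum]
  refine sum_congr rfl fun j _ => ?_
  rw [← mul_prod_erase univ (fun i => x - s i) (mem_univ j), mul_right_comm,
    mul_inv_cancel₀ (sub_ne_zero.2 (hx j)), one_mul]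

theorem eval_nuijStep_prod_X_sub_C (ε : K) (hx : ∀ j, x ≠ s j) :
    eval x (nuijStep ε (∏ j, (X - C (s j)))) =
      eval x (∏ j, (X - C (s j))) * (1 + ε * ∑ j, (x - s j)⁻¹) := by
  rw [nuijStep, eval_add, eval_mul, eval_C, eval_derivative_prod_X_sub_C_of_ne hx]
  ring

theorem eval_nuijStep_prod_X_sub_C_eq_zero_iff (ε : K) (hx : ∀ j, x ≠ s j) :
    eval x (nuijStep ε (∏ j, (X - C (s j)))) = 0 ↔ 1 + ε * ∑ j, (x - s j)⁻¹ = 0 := by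
  rw [eval_nuijStep_prod_X_sub_C ε hx, mul_eq_zero, or_iff_right (eval_prod_X_sub_C_ne_zero hx)]

theorem eval_nuijStep_prod_X_sub_C_self_ne_zero {ε : K} (hε : ε ≠ 0) {i : ι}
    (hi : ∀ j, j ≠ i → s j ≠ s i) : eval (s i) (nuijStep ε (∏ j, (X - C (s j)))) ≠ 0 := by
  classical
  have hroot : eval (s i) (∏ j, (X - C (s j))) = 0 := eval_prod_X_sub_C_eq_zero_iff.2 ⟨i, rfl⟩
  rw [nuijStep, eval_add, hroot, zero_add, eval_mul, eval_C, eval_derivative_prod_X_sub_C_self]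
  exact mul_ne_zero hε (prod_ne_zero_iff.2 fun j hj =>
    sub_ne_zero.2 (hi j (mem_erase.1 hj).1).symm)

end Field

theorem Polynomial.Splits.exists_monotone_eq_prod_X_sub_C {K : Type*} [Field K] [LinearOrder K]
    {q : K[X]} (hq : q.Splits) (hm : q.Monic) {m : ℕ} (hd : q.natDegree = m) :
    ∃ ν : Fin m → K, Monotone ν ∧ q = ∏ j, (X - C (ν j)) := by
  subst hd
  set L := q.roots.sort (· ≤ ·)
  have hL : L.length = q.natDegree := by rw [Multiset.length_sort, hq.natDegree_eq_card_roots]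
  refine ⟨fun j => L.get (Fin.cast hL.symm j),
    fun i j hij => (Multiset.pairwise_sort _ _).rel_get_of_le hij, ?_⟩
  conv_lhs => rw [hq.eq_prod_roots_of_monic hm, ← Multiset.sort_eq q.roots (· ≤ ·)]
  rw [Multiset.map_coe, Multiset.prod_coe, ← Fin.prod_univ_getElem]
  exact Fintype.prod_equiv (finCongr (by simp [hq.natDegree_eq_card_roots])) _ _
    fun i => by simp [L]

theorem hasDerivAt_sum_inv_sub {𝕜 ι : Type*} [NontriviallyNormedField 𝕜] [Fintype ι]
    {s : ι → 𝕜} {x : 𝕜} (hx : ∀ j, x ≠ s j) :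
    HasDerivAt (fun y => ∑ j, (y - s j)⁻¹) (-∑ j, ((x - s j) ^ 2)⁻¹) x := by
  rw [← sum_neg_distrib]
  exact HasDerivAt.fun_sum fun j _ => by
    simpa [neg_div] using ((hasDerivAt_id x).sub_const (s j)).fun_inv (sub_ne_zero.2 (hx j))

section Real

variable {ι : Type*} [Fintype ι] {s : ι → ℝ} {x y ε δ : ℝ}

theorem im_eq_zero_of_isRoot_map_nuijStep (hε : 0 < ε) {z : ℂ}
    (hz : ((nuijStep ε (∏ j, (X - C (s j)))).map (algebraMap ℝ ℂ)).IsRoot z) : z.im = 0 := by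
  by_contra him
  rcases isEmpty_or_nonempty ι with hι | hι
  · simp [nuijStep] at hz
  have hzs : ∀ j, z ≠ (s j : ℂ) := fun j h => him (by simp [h])
  have hmap : (∏ j, (X - C (s j))).map (algebraMap ℝ ℂ) = ∏ j, (X - C (s j : ℂ)) := by
    simp [Polynomial.map_prod]
  rw [IsRoot, map_nuijStep, hmap, eval_nuijStep_prod_X_sub_C _ hzs] at hz
  have hS := (mul_eq_zero.1 hz).resolve_left (eval_prod_X_sub_C_ne_zero hzs)
  have hIm : (∑ j, (z - s j)⁻¹).im = -z.im * ∑ j, (Complex.normSq (z - s j))⁻¹ := by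
    simp [Complex.im_sum, Complex.inv_im, div_eq_mul_inv, mul_sum]
  have hpos : 0 < ∑ j, (Complex.normSq (z - s j))⁻¹ :=
    sum_pos (fun j _ => inv_pos.2 (Complex.normSq_pos.2 (sub_ne_zero.2 (hzs j)))) univ_nonempty
  have h0 : ε * (-z.im * ∑ j, (Complex.normSq (z - s j))⁻¹) = 0 := by
    simpa [hIm] using congrArg Complex.im hS
  simp [hε.ne', him, hpos.ne'] at h0

theorem splits_nuijStep (hε : 0 < ε) : (nuijStep ε (∏ j, (X - C (s j)))).Splits :=
  Splits.of_splits_map_of_injective (algebraMap ℝ ℂ).injective (IsAlgClosed.splits _)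
    fun z hz => ⟨z.re, Complex.ext (by simp)
      (by simp [im_eq_zero_of_isRoot_map_nuijStep hε (isRoot_of_mem_roots hz)])⟩

theorem sum_inv_sub_lt_sum_inv_sub [Nonempty ι] (hxy : x < y) (hs : ∀ j, s j < x ∨ y < s j) :
    ∑ j, (y - s j)⁻¹ < ∑ j, (x - s j)⁻¹ :=
  sum_lt_sum_of_nonempty univ_nonempty fun j _ => by
    rcases hs j with h | h
    · exact inv_strictAnti₀ (by linarith) (by linarith)
    · exact (inv_lt_inv_of_neg (by linarith) (by linarith)).2 (by linarith)

/-- Near `x` the polynomial equals `P * (1 + ε F)`, whose derivative at a zero of `1 + ε F` is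
`P(x) ε F'(x)`, and `F' < 0`. -/
theorem eval_derivative_nuijStep_ne_zero [Nonempty ι] (hε : ε ≠ 0) (hx : ∀ j, x ≠ s j)
    (hroot : eval x (nuijStep ε (∏ j, (X - C (s j)))) = 0) :
    eval x (derivative (nuijStep ε (∏ j, (X - C (s j))))) ≠ 0 := by
  set P : ℝ[X] := ∏ j, (X - C (s j))
  have hF := (eval_nuijStep_prod_X_sub_C_eq_zero_iff ε hx).1 hroot
  have hfactor : (fun y => eval y (nuijStep ε P)) =ᶠ[nhds x]
      fun y => eval y P * (1 + ε * ∑ j, (y - s j)⁻¹) := by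
    have hopen : IsOpen {y : ℝ | ∀ j, y ≠ s j} := by
      simpa only [Set.ofPred_forall] using isOpen_iInter_of_finite fun j => isOpen_ne
    filter_upwards [hopen.mem_nhds hx] with y hy using eval_nuijStep_prod_X_sub_C ε hy
  have hderiv := (P.hasDerivAt x).mul ((hasDerivAt_sum_inv_sub hx).const_mul ε |>.const_add 1)
  rw [hF, mul_zero, zero_add] at hderiv
  rw [((nuijStep ε P).hasDerivAt x).unique (hderiv.congr_of_eventuallyEq hfactor)]
  have hsq : 0 < ∑ j, ((x - s j) ^ 2)⁻¹ :=
    sum_pos (fun j _ => by have := sub_ne_zero.2 (hx j); positivity) univ_nonempty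
  exact mul_ne_zero (eval_prod_X_sub_C_ne_zero hx) (mul_ne_zero hε (neg_ne_zero.2 hsq.ne'))

/-- The term of `s t` is at most `-4n/δ`, each of the other `n - 1` terms at most `2/δ`. -/
theorem sum_inv_sub_lt_neg_inv {t : ι} (hδ : 0 < δ) (hsep : ∀ j, s j ≤ s t - δ ∨ s t ≤ s j)
    (hx : s t - δ / (4 * Fintype.card ι) ≤ x) (hxt : x < s t) : ∑ j, (x - s j)⁻¹ < -δ⁻¹ := by
  classical
  set n : ℝ := (Fintype.card ι : ℝ)
  have hn : 1 ≤ n := Nat.one_le_cast.2 (Fintype.card_pos_iff.2 ⟨t⟩)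
  have hη : δ / (4 * n) ≤ δ / 4 := div_le_div_of_nonneg_left hδ.le (by norm_num) (by linarith)
  have hnear : (x - s t)⁻¹ ≤ -(4 * n / δ) := by
    rw [← neg_sub, inv_neg, neg_le_neg_iff, ← inv_div]
    exact inv_anti₀ (sub_pos.2 hxt) (by linarith)
  have hfar : ∀ j ∈ univ.erase t, (x - s j)⁻¹ ≤ 2 / δ := fun j _ => by
    rcases hsep j with h | h
    · rw [← inv_div]
      exact inv_anti₀ (by positivity) (by linarith)
    · exact (inv_nonpos.2 (by linarith)).trans (by positivity)
  have hcard : ((univ.erase t).card : ℝ) ≤ n := Nat.cast_le.2 (card_erase_le.trans_eq card_univ)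
  calc ∑ j, (x - s j)⁻¹ = (x - s t)⁻¹ + ∑ j ∈ univ.erase t, (x - s j)⁻¹ :=
        (add_sum_erase _ _ (mem_univ t)).symm
    _ ≤ -(4 * n / δ) + n * (2 / δ) := add_le_add hnear <| (sum_le_card_nsmul _ _ _ hfar).trans <| by
      rw [nsmul_eq_mul]
      exact mul_le_mul_of_nonneg_right hcard (by positivity)
    _ = -(2 * n) * δ⁻¹ := by ring
    _ < -δ⁻¹ := by nlinarith [inv_pos.2 hδ]

theorem inv_lt_sum_inv_sub {t : ι} (hδ : 0 < δ) (hsep : ∀ j, s j ≤ s t ∨ s t + δ ≤ s j)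
    (hxt : s t < x) (hx : x ≤ s t + δ / (4 * Fintype.card ι)) : δ⁻¹ < ∑ j, (x - s j)⁻¹ := by
  have h := sum_inv_sub_lt_neg_inv (s := fun j => -s j) (x := -x) (t := t) hδ
    (fun j => (hsep j).symm.imp (by intro h; linarith) (by intro h; linarith))
    (by linarith) (by linarith)
  simp only [sub_neg_eq_add, neg_add_eq_sub, ← neg_sub x, inv_neg, sum_neg_distrib] at h
  linarith

theorem one_add_mul_sum_inv_sub_neg {t : ι} (hδ : 0 < δ) (hδε : δ ≤ ε)
    (hsep : ∀ j, s j ≤ s t - δ ∨ s t ≤ s j) (hx : s t - δ / (4 * Fintype.card ι) ≤ x)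
    (hxt : x < s t) : 1 + ε * ∑ j, (x - s j)⁻¹ < 0 := by
  have h := mul_lt_mul_of_pos_left (sum_inv_sub_lt_neg_inv hδ hsep hx hxt) (hδ.trans_le hδε)
  have : 1 ≤ ε * δ⁻¹ := by rw [← div_eq_mul_inv, one_le_div hδ]; exact hδε
  linarith

theorem one_add_mul_sum_inv_sub_pos (hε : 0 < ε) (hx : ∀ j, x ≤ s j - 2 * Fintype.card ι * ε) :
    0 < 1 + ε * ∑ j, (x - s j)⁻¹ := by
  rcases isEmpty_or_nonempty ι with hι | ⟨⟨j₀⟩⟩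
  · simp
  set n : ℝ := (Fintype.card ι : ℝ)
  have hn : 0 < n := Nat.cast_pos.2 (Fintype.card_pos_iff.2 ⟨j₀⟩)
  have hterm : ∀ j ∈ univ, -(2 * n * ε)⁻¹ ≤ (x - s j)⁻¹ := fun j _ => by
    rw [← neg_sub, inv_neg, neg_le_neg_iff]
    exact inv_anti₀ (by positivity) (by linarith [hx j])
  have hsum := card_nsmul_le_sum _ _ _ hterm
  rw [card_univ, nsmul_eq_mul] at hsum
  calc (0 : ℝ) < 1 + ε * (n * -(2 * n * ε)⁻¹) := by field_simp; norm_num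
    _ ≤ 1 + ε * ∑ j, (x - s j)⁻¹ := by gcongr

theorem exists_mem_Ioo_eval_nuijStep_eq_zero (hxy : x < y) (hs : ∀ j, s j < x ∨ y < s j)
    (hx : 0 < 1 + ε * ∑ j, (x - s j)⁻¹) (hy : 1 + ε * ∑ j, (y - s j)⁻¹ < 0) :
    ∃ z ∈ Set.Ioo x y, eval z (nuijStep ε (∏ j, (X - C (s j)))) = 0 := by
  set P : ℝ[X] := ∏ j, (X - C (s j))
  have hxs : ∀ j, x ≠ s j := fun j h => by rcases hs j with h' | h' <;> linarith
  have hys : ∀ j, y ≠ s j := fun j h => by rcases hs j with h' | h' <;> linarith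
  have hPP : 0 < eval x P * eval y P := by
    simp only [P, eval_prod, eval_sub, eval_X, eval_C, ← prod_mul_distrib]
    exact prod_pos fun j _ => by
      rcases hs j with h | h
      · exact mul_pos (by linarith) (by linarith)
      · exact mul_pos_of_neg_of_neg (by linarith) (by linarith)
  obtain ⟨z, hz, hz0⟩ := intermediate_value_Ioo' hxy.le
    ((nuijStep ε P).continuous.mul continuous_const).continuousOn
    (show (0 : ℝ) ∈ Set.Ioo (eval y (nuijStep ε P) * eval x P) (eval x (nuijStep ε P) * eval x P) by
      rw [eval_nuijStep_prod_X_sub_C ε hxs, eval_nuijStep_prod_X_sub_C ε hys]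
      constructor
      · nlinarith [mul_neg_of_pos_of_neg hPP hy]
      · nlinarith [mul_pos (mul_self_pos.2 (eval_prod_X_sub_C_ne_zero hxs)) hx])
  exact ⟨z, hz, (mul_eq_zero.1 hz0).resolve_right (eval_prod_X_sub_C_ne_zero hxs)⟩

theorem exists_lt_eval_nuijStep_eq_zero (hε : 0 < ε) {t : ι} (hmin : ∀ j, s t ≤ s j) :
    ∃ z < s t, eval z (nuijStep ε (∏ j, (X - C (s j)))) = 0 := by
  set n : ℝ := (Fintype.card ι : ℝ)
  have hn : 1 ≤ n := Nat.one_le_cast.2 (Fintype.card_pos_iff.2 ⟨t⟩)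
  have hη : 0 < ε / (4 * n) := by positivity
  have hηε : ε / (4 * n) < 2 * n * ε := by
    rw [div_lt_iff₀ (by positivity)]
    nlinarith [mul_le_mul hn hn zero_le_one (by linarith)]
  obtain ⟨z, hz, hz0⟩ := exists_mem_Ioo_eval_nuijStep_eq_zero (x := s t - 2 * n * ε)
    (y := s t - ε / (4 * n)) (by linarith) (fun j => Or.inr (by linarith [hmin j]))
    (one_add_mul_sum_inv_sub_pos hε fun j => by linarith [hmin j])
    (one_add_mul_sum_inv_sub_neg hε le_rfl (fun j => Or.inr (hmin j)) le_rfl (by linarith))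
  exact ⟨z, by linarith [hz.2], hz0⟩

theorem exists_mem_Ioo_eval_nuijStep_eq_zero_of_gap (hε : 0 < ε) {a b : ι} (hab : s a < s b)
    (hsep : ∀ j, s j ≤ s a ∨ s b ≤ s j) :
    ∃ z ∈ Set.Ioo (s a) (s b), eval z (nuijStep ε (∏ j, (X - C (s j)))) = 0 := by
  set n : ℝ := (Fintype.card ι : ℝ)
  have hn : 1 ≤ n := Nat.one_le_cast.2 (Fintype.card_pos_iff.2 ⟨a⟩)
  set δ := min (s b - s a) ε
  have hδ : 0 < δ := lt_min (sub_pos.2 hab) hε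
  have hδab : δ ≤ s b - s a := min_le_left _ _
  have hη : 0 < δ / (4 * n) := by positivity
  have hηδ : δ / (4 * n) ≤ δ / 4 := div_le_div_of_nonneg_left hδ.le (by norm_num) (by linarith)
  have hxpos : 0 < 1 + ε * ∑ j, (s a + δ / (4 * n) - s j)⁻¹ := by
    have h := inv_lt_sum_inv_sub (x := s a + δ / (4 * n)) hδ
      (fun j => (hsep j).imp_right fun h => by linarith) (by linarith) le_rfl
    nlinarith [inv_pos.2 hδ]
  obtain ⟨z, hz, hz0⟩ := exists_mem_Ioo_eval_nuijStep_eq_zero (x := s a + δ / (4 * n))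
    (y := s b - δ / (4 * n)) (by linarith)
    (fun j => (hsep j).imp (fun h => by linarith) (fun h => by linarith)) hxpos
    (one_add_mul_sum_inv_sub_neg hδ (min_le_right _ _)
      (fun j => (hsep j).imp_left fun h => by linarith) le_rfl (by linarith))
  exact ⟨z, ⟨by linarith [hz.1], by linarith [hz.2]⟩, hz0⟩

theorem le_sub_of_eval_nuijStep_eq_zero (hδ : 0 < δ) (hδε : δ ≤ ε) {t : ι}
    (hsep : ∀ j, s j ≤ s t - δ ∨ s t ≤ s j)
    (hroot : eval x (nuijStep ε (∏ j, (X - C (s j)))) = 0) (hxt : x < s t) :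
    x ≤ s t - δ / (4 * Fintype.card ι) := by
  have hn : (1 : ℝ) ≤ Fintype.card ι := Nat.one_le_cast.2 (Fintype.card_pos_iff.2 ⟨t⟩)
  have hηδ : δ / (4 * Fintype.card ι) < δ := div_lt_self hδ (by linarith)
  by_contra! h
  have hxs : ∀ j, x ≠ s j := fun j hj => by rcases hsep j with h' | h' <;> linarith
  exact (one_add_mul_sum_inv_sub_neg hδ hδε hsep h.le hxt).ne
    ((eval_nuijStep_prod_X_sub_C_eq_zero_iff ε hxs).1 hroot)

/-- Two roots of `P + ε P'` with no root of `P` between them are the same root: `F` is strictly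
decreasing there, and such roots are simple. -/
theorem eq_of_nuijStep_eq_prod_of_forall_lt_or_lt {ν : ι → ℝ} (hε : ε ≠ 0)
    (hq : nuijStep ε (∏ j, (X - C (s j))) = ∏ j, (X - C (ν j))) {i j : ι}
    (hij : ν i ≤ ν j) (hsep : ∀ l, s l < ν i ∨ ν j < s l) : i = j := by
  by_contra hne
  have : Nonempty ι := ⟨i⟩
  have hroot : ∀ l, eval (ν l) (nuijStep ε (∏ j, (X - C (s j)))) = 0 := fun l => by
    rw [hq]; exact eval_prod_X_sub_C_eq_zero_iff.2 ⟨l, rfl⟩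
  have hi : ∀ l, ν i ≠ s l := fun l h => by rcases hsep l with h' | h' <;> linarith
  have hj : ∀ l, ν j ≠ s l := fun l h => by rcases hsep l with h' | h' <;> linarith
  rcases hij.lt_or_eq with hlt | heq
  · have hFi := (eval_nuijStep_prod_X_sub_C_eq_zero_iff ε hi).1 (hroot i)
    have hFj := (eval_nuijStep_prod_X_sub_C_eq_zero_iff ε hj).1 (hroot j)
    have hF : ∑ l, (ν j - s l)⁻¹ = ∑ l, (ν i - s l)⁻¹ := mul_left_cancel₀ hε (by linarith)
    exact (sum_inv_sub_lt_sum_inv_sub hlt hsep).ne hF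
  · refine eval_derivative_nuijStep_ne_zero hε hi (hroot i) ?_
    rw [hq]
    exact eval_derivative_prod_X_sub_C_eq_zero hne heq

end Real

def HasGapsUpTo {m : ℕ} (δ : ℝ) (k : ℕ) (s : Fin m → ℝ) : Prop :=
  ∀ i j : Fin m, (i : ℕ) + 1 = j → (j : ℕ) ≤ k → δ ≤ s j - s i

section Ordered

variable {m k : ℕ} {s ν : Fin m → ℝ} {ε δ : ℝ}

theorem exists_monotone_nuijStep_eq_prod (hε : 0 < ε) (s : Fin m → ℝ) :
    ∃ ν : Fin m → ℝ, Monotone ν ∧ nuijStep ε (∏ j, (X - C (s j))) = ∏ j, (X - C (ν j)) :=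
  (splits_nuijStep hε).exists_monotone_eq_prod_X_sub_C (monic_nuijStep (monic_prod_X_sub_C _ _) ε)
    (by rw [natDegree_nuijStep (monic_prod_X_sub_C _ _), natDegree_finsetProd_X_sub_C_eq_card,
      card_univ, Fintype.card_fin])

theorem HasGapsUpTo.le_sub (hs : Monotone s) (h : HasGapsUpTo δ k s) {i j : Fin m} (hij : i < j)
    (hj : (j : ℕ) ≤ k) : δ ≤ s j - s i := by
  have hi : (i : ℕ) + 1 < m := by omega
  have hgap := h i ⟨i + 1, hi⟩ rfl (by simp only; omega)
  have hmono := hs (show (⟨i + 1, hi⟩ : Fin m) ≤ j from Fin.le_def.2 (by simp only; omega))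
  linarith

theorem HasGapsUpTo.sub_le_or_le (hs : Monotone s) (h : HasGapsUpTo δ k s) {t : Fin m}
    (ht : (t : ℕ) ≤ k) (j : Fin m) : s j ≤ s t - δ ∨ s t ≤ s j :=
  (lt_or_ge j t).imp (fun hjt => by linarith [h.le_sub hs hjt ht]) fun htj => hs htj

theorem le_of_nuijStep_eq_prod_of_lt (hε : 0 < ε) (hs : Monotone s) (hν : Monotone ν)
    (hq : nuijStep ε (∏ j, (X - C (s j))) = ∏ j, (X - C (ν j))) {t : Fin m}
    (hlow : ∀ l < t, s l < ν t) (j : Fin m) (htj : t < j) : s t ≤ ν j := by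
  by_contra! hj
  exact htj.ne (eq_of_nuijStep_eq_prod_of_forall_lt_or_lt hε.ne' hq (hν htj.le) fun l =>
    (lt_or_ge l t).imp (hlow l) fun hl => hj.trans_le (hs hl))

theorem nuijStep_roots_interlace (hε : 0 < ε) (hδ : 0 < δ) (hs : Monotone s)
    (hgap : HasGapsUpTo δ k s) (hν : Monotone ν)
    (hq : nuijStep ε (∏ j, (X - C (s j))) = ∏ j, (X - C (ν j))) (t : Fin m) (ht : (t : ℕ) ≤ k) :
    ν t < s t ∧ ∀ j, t < j → s t ≤ ν j := by
  have hroot : ∀ z, eval z (nuijStep ε (∏ j, (X - C (s j)))) = 0 ↔ ∃ l, ν l = z := fun z => by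
    rw [hq, eval_prod_X_sub_C_eq_zero_iff]
  suffices h : ∀ n (hn : n < m), n ≤ k →
      (∀ l < (⟨n, hn⟩ : Fin m), s l < ν ⟨n, hn⟩) ∧ ν ⟨n, hn⟩ < s ⟨n, hn⟩ by
    obtain ⟨hlow, hup⟩ := h t t.2 ht
    exact ⟨hup, le_of_nuijStep_eq_prod_of_lt hε hs hν hq hlow⟩
  intro n
  induction n with
  | zero =>
    intro hn _
    obtain ⟨z, hz, hz0⟩ := exists_lt_eval_nuijStep_eq_zero hε (t := ⟨0, hn⟩) fun j =>
      hs (Fin.le_def.2 (Nat.zero_le _))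
    obtain ⟨l, rfl⟩ := (hroot z).1 hz0
    exact ⟨fun l hl => absurd (Fin.lt_def.1 hl) (Nat.not_lt_zero _),
      (hν (Fin.le_def.2 (Nat.zero_le _))).trans_lt hz⟩
  | succ n ih =>
    intro hn hnk
    let a : Fin m := ⟨n, by omega⟩
    let b : Fin m := ⟨n + 1, hn⟩
    have hab : a < b := Fin.lt_def.2 (Nat.lt_succ_self n)
    have hsplit : ∀ j : Fin m, j ≤ a ∨ b ≤ j := fun j => by
      simp only [Fin.le_def, a, b]; omega
    obtain ⟨hlow, hup⟩ := ih (by omega) (by omega)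
    have hgapab : δ ≤ s b - s a := hgap a b rfl hnk
    have hsimple : ∀ j, j ≠ a → s j ≠ s a := fun j hj hja => by
      rcases hj.lt_or_gt with h | h
      · linarith [hgap.le_sub hs h (by simp only [a]; omega)]
      · linarith [hs ((hsplit j).resolve_left (not_le.2 h))]
    refine ⟨fun l hl => ?_, ?_⟩
    · refine (hs ((hsplit l).resolve_right (not_le.2 hl))).trans_lt
        ((le_of_nuijStep_eq_prod_of_lt hε hs hν hq hlow b hab).lt_of_ne fun h => ?_)
      exact eval_nuijStep_prod_X_sub_C_self_ne_zero hε.ne' hsimple ((hroot _).2 ⟨b, h.symm⟩)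
    · obtain ⟨z, hz, hz0⟩ := exists_mem_Ioo_eval_nuijStep_eq_zero_of_gap hε
        (by linarith : s a < s b) fun j => (hsplit j).imp (fun h => hs h) fun h => hs h
      obtain ⟨l, rfl⟩ := (hroot z).1 hz0
      have hbl : b ≤ l := (hsplit l).resolve_left fun h => by linarith [hν h, hz.1]
      exact (hν hbl).trans_lt hz.2

theorem HasGapsUpTo.nuijStep_roots (hδ : 0 < δ) (hδε : δ ≤ ε) (hs : Monotone s)
    (hgap : HasGapsUpTo δ k s) (hν : Monotone ν)
    (hq : nuijStep ε (∏ j, (X - C (s j))) = ∏ j, (X - C (ν j))) :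
    HasGapsUpTo (δ / (4 * m)) (k + 1) ν := by
  intro i j hij hjk
  have hik : (i : ℕ) ≤ k := by omega
  obtain ⟨hup, habove⟩ := nuijStep_roots_interlace (hδ.trans_le hδε) hδ hs hgap hν hq i hik
  have hroot : eval (ν i) (nuijStep ε (∏ j, (X - C (s j)))) = 0 := by
    rw [hq]; exact eval_prod_X_sub_C_eq_zero_iff.2 ⟨i, rfl⟩
  have hgap' := le_sub_of_eval_nuijStep_eq_zero hδ hδε (hgap.sub_le_or_le hs hik) hroot hup
  rw [Fintype.card_fin] at hgap'
  linarith [habove j (Fin.lt_def.2 (by omega))]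

theorem exists_monotone_iterate_nuijStep_eq_prod (hε : 0 < ε) (Λ : Fin m → ℝ) (n : ℕ) :
    ∃ lam : Fin m → ℝ, Monotone lam ∧
      (nuijStep ε)^[n] (∏ j, (X - C (Λ j))) = ∏ j, (X - C (lam j)) ∧
      HasGapsUpTo (ε * (4 * m : ℝ)⁻¹ ^ n) n lam := by
  induction n with
  | zero =>
    refine ⟨Λ ∘ Tuple.sort Λ, Tuple.monotone_sort Λ,
      (Equiv.prod_comp (Tuple.sort Λ) fun j => X - C (Λ j)).symm, fun i j hij hj => ?_⟩
    omega
  | succ n ih =>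
    obtain ⟨lam, hlam, hiter, hgap⟩ := ih
    obtain ⟨ν, hν, hq⟩ := exists_monotone_nuijStep_eq_prod hε lam
    refine ⟨ν, hν, by rw [Function.iterate_succ_apply', hiter, hq], ?_⟩
    rcases Nat.eq_zero_or_pos m with rfl | hm
    · exact fun i => i.elim0
    have hm' : (1 : ℝ) ≤ m := Nat.one_le_cast.2 hm
    have hδ : 0 < ε * (4 * m : ℝ)⁻¹ ^ n := by positivity
    have hδε : ε * (4 * m : ℝ)⁻¹ ^ n ≤ ε := mul_le_of_le_one_right hε.le
      (pow_le_one₀ (by positivity) (inv_le_one_of_one_le₀ (by linarith)))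
    have := hgap.nuijStep_roots hδ hδε hlam hν hq
    rwa [pow_succ, ← mul_assoc, ← div_eq_mul_inv]

end Ordered

/-- Nuij approximation: for every `m` there is `c > 0`, depending only on `m`, such
that for every monic hyperbolic `p = ∏ (ζ - Λⱼ)` of degree `m` and every `ε > 0`,
`p_ε = (1 + ε d/dζ)^{m-1} p` factors as `∏ (ζ - λⱼ(ε))` with ordered roots satisfying
`λ_{k+1}(ε) - λ_k(ε) ≥ c·ε`; in particular `p_ε` is strictly hyperbolic. -/
theorem nuij_approximation_root_gaps (m : ℕ) :
    ∃ c > 0, ∀ Λ : Fin m → ℝ, ∀ ε : ℝ, 0 < ε →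
      ∃ lam : Fin m → ℝ, Monotone lam ∧
        (fun q : Polynomial ℝ => q + C ε * derivative q)^[m - 1]
            (∏ j, (X - C (Λ j)))
          = ∏ j, (X - C (lam j)) ∧
        ∀ i j : Fin m, (i : ℕ) + 1 = (j : ℕ) → c * ε ≤ lam j - lam i := by
  refine ⟨(4 * m : ℝ)⁻¹ ^ (m - 1), ?_, fun Λ ε hε => ?_⟩
  · rcases Nat.eq_zero_or_pos m with rfl | hm
    · simp
    · positivity
  obtain ⟨lam, hlam, hiter, hgap⟩ := exists_monotone_iterate_nuijStep_eq_prod hε Λ (m - 1)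
  refine ⟨lam, hlam, hiter, fun i j hij => ?_⟩
  linarith [hgap i j hij (by omega)]
end
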